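/- arXiv:2201.12862 — 8 statements merged into one kernel-verified Lean document; each statement's English description precedes it below -/
import Mathlib

section
/- Let r > 0, T > 0, let α : [0,∞) → [0,∞) be positive definite, let γ : [0,∞) → [0,∞) be continuous and nondecreasing with γ(s) < s for all s > 0, and let v : [−r, T] → [0,∞) be continuous on [−r,T] and differentiable on (0,T). Suppose that for every t ∈ (0,T), v(t) ≥ γ( max_{s∈[t−r,t]} v(s) ) implies v′(t) ≤ −α(v(t)). Then the running maximum m(t) := max_{s∈[t−r,t]} v(s) is nonincreasing on [0,T]; in particular v(t) ≤ max_{s∈[−r,0]} v(s) for all t ∈ [0,T]. -/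
/-- Razumikhin monotonicity claim in the proof of Theorem 1: under the Razumikhin condition
on the flow interval `(0,T)` with memory window of length `r`, the running maximum
`m(t) = max_{s ∈ [t-r, t]} v(s)` is nonincreasing on `[0,T]`; in particular
`v(t) ≤ max_{s ∈ [-r,0]} v(s)` for all `t ∈ [0,T]`. -/
theorem razumikhin_running_max (r T : ℝ) (hr : 0 < r) (hT : 0 < T)
    (α : ℝ → ℝ) (hαcont : ContinuousOn α (Set.Ici 0)) (hα0 : α 0 = 0)
    (hαpos : ∀ s : ℝ, 0 < s → 0 < α s)
    (γ : ℝ → ℝ) (hγnn : ∀ s : ℝ, 0 ≤ s → 0 ≤ γ s)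
    (hγcont : ContinuousOn γ (Set.Ici 0)) (hγmono : MonotoneOn γ (Set.Ici 0))
    (hsg : ∀ s : ℝ, 0 < s → γ s < s)
    (v : ℝ → ℝ)
    (hvnn : ∀ t ∈ Set.Icc (-r) T, 0 ≤ v t)
    (hvcont : ContinuousOn v (Set.Icc (-r) T))
    (hvdiff : ∀ t ∈ Set.Ioo (0 : ℝ) T, DifferentiableAt ℝ v t)
    (hraz : ∀ t ∈ Set.Ioo (0 : ℝ) T,
      v t ≥ γ (sSup (v '' Set.Icc (t - r) t)) → deriv v t ≤ -α (v t)) :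
    AntitoneOn (fun t : ℝ => sSup (v '' Set.Icc (t - r) t)) (Set.Icc 0 T) ∧
    ∀ t ∈ Set.Icc (0 : ℝ) T, v t ≤ sSup (v '' Set.Icc (-r) 0) := by
  have hsub : ∀ t ∈ Set.Icc (0:ℝ) T, Set.Icc (t - r) t ⊆ Set.Icc (-r) T := by
    intro t ht u hu
    exact ⟨by linarith [ht.1, hu.1], le_trans hu.2 ht.2⟩
  have hne : ∀ t : ℝ, (Set.Icc (t - r) t).Nonempty := fun t => ⟨t, by constructor <;> linarith⟩
  have hbdd : ∀ t ∈ Set.Icc (0:ℝ) T, BddAbove (v '' Set.Icc (t - r) t) := by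
    intro t ht
    exact (isCompact_Icc.image_of_continuousOn (hvcont.mono (hsub t ht))).bddAbove
  have hle_m : ∀ t ∈ Set.Icc (0:ℝ) T, ∀ u ∈ Set.Icc (t - r) t,
      v u ≤ sSup (v '' Set.Icc (t - r) t) := by
    intro t ht u hu
    exact le_csSup (hbdd t ht) ⟨u, hu, rfl⟩
  have key : ∀ t₀ ∈ Set.Icc (0:ℝ) T, ∀ s ∈ Set.Icc t₀ T,
      v s ≤ sSup (v '' Set.Icc (t₀ - r) t₀) := by
    intro t₀ ht₀
    by_contra hcon
    push_neg at hcon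
    obtain ⟨s, hs, hgt⟩ := hcon
    set c := sSup (v '' Set.Icc (t₀ - r) t₀) with hc
    have ht₀mem : t₀ ∈ Set.Icc (t₀ - r) t₀ := ⟨by linarith, le_refl _⟩
    have hvt₀ : v t₀ ≤ c := hle_m t₀ ht₀ t₀ ht₀mem
    have hcnn : 0 ≤ c := le_trans (hvnn t₀ (hsub t₀ ht₀ ht₀mem)) hvt₀
    have hst₀ : t₀ < s := by
      rcases lt_or_eq_of_le hs.1 with h | h
      · exact h
      · exfalso; rw [← h] at hgt; linarith
    have ht₀T : t₀ < T := lt_of_lt_of_le hst₀ hs.2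
    -- obtain a strict interior witness s₁ ∈ (t₀, T) with c < v s₁
    obtain ⟨s₁, hs₁, hvs₁⟩ : ∃ s₁ ∈ Set.Ioo t₀ T, c < v s₁ := by
      rcases lt_or_eq_of_le hs.2 with h | h
      · exact ⟨s, ⟨hst₀, h⟩, hgt⟩
      · have hvT : c < v T := by rw [← h]; exact hgt
        have hIooSub : Set.Ioo t₀ T ⊆ Set.Icc (-r) T := by
          intro u hu; exact ⟨by linarith [ht₀.1, hu.1], hu.2.le⟩
        have hcontT : ContinuousWithinAt v (Set.Ioo t₀ T) T :=
          (hvcont T ⟨by linarith, le_refl T⟩).mono hIooSub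
        have hev : ∀ᶠ u in nhdsWithin T (Set.Ioo t₀ T), c < v u :=
          hcontT.eventually (eventually_gt_nhds hvT)
        have hNB : (nhdsWithin T (Set.Ioo t₀ T)).NeBot := by
          rw [mem_closure_iff_nhdsWithin_neBot.symm]
          rw [closure_Ioo (ne_of_lt ht₀T)]
          exact ⟨ht₀T.le, le_refl T⟩
        obtain ⟨u, hu1, hu2⟩ := (hev.and self_mem_nhdsWithin).exists
        exact ⟨u, hu2, hu1⟩
    -- first time in [t₀, s₁] where v reaches v s₁
    set K := Set.Icc t₀ s₁ ∩ v ⁻¹' Set.Ici (v s₁) with hK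
    have hIccSub : Set.Icc t₀ s₁ ⊆ Set.Icc (-r) T := by
      intro u hu; exact ⟨by linarith [ht₀.1, hu.1], le_trans hu.2 hs₁.2.le⟩
    have hKclosed : IsClosed K :=
      (hvcont.mono hIccSub).preimage_isClosed_of_isClosed isClosed_Icc isClosed_Ici
    have hKcompact : IsCompact K := isCompact_Icc.of_isClosed_subset hKclosed Set.inter_subset_left
    have hKne : K.Nonempty := ⟨s₁, ⟨hs₁.1.le, le_refl _⟩, Set.mem_preimage.2 (Set.mem_Ici.2 (le_refl _))⟩
    set t' := sInf K with ht'
    have ht'K : t' ∈ K := hKcompact.sInf_mem hKne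
    have ht'Icc : t' ∈ Set.Icc t₀ s₁ := ht'K.1
    have hvt' : v s₁ ≤ v t' := ht'K.2
    have ht₀t' : t₀ < t' := by
      rcases lt_or_eq_of_le ht'Icc.1 with h | h
      · exact h
      · exfalso; rw [← h] at hvt'; linarith
    have hlt : ∀ u ∈ Set.Icc t₀ s₁, u < t' → v u < v s₁ := by
      intro u hu hut
      by_contra h
      push_neg at h
      have : t' ≤ u := csInf_le hKcompact.bddBelow ⟨hu, h⟩
      linarith
    have ht'Icc0T : t' ∈ Set.Icc (0:ℝ) T := ⟨by linarith [ht₀.1], by linarith [ht'Icc.2, hs₁.2]⟩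
    -- the running max at t' equals v t'
    have hmle : sSup (v '' Set.Icc (t' - r) t') ≤ v t' := by
      refine csSup_le ((hne t').image v) ?_
      rintro x ⟨u, hu, rfl⟩
      rcases le_or_gt u t₀ with h | h
      · have : v u ≤ c := hle_m t₀ ht₀ u ⟨by linarith [hu.1], h⟩
        linarith
      · rcases lt_or_eq_of_le hu.2 with h2 | h2
        · have := hlt u ⟨h.le, by linarith [ht'Icc.2]⟩ h2
          linarith
        · rw [h2]
      
    have hmge : v t' ≤ sSup (v '' Set.Icc (t' - r) t') :=
      hle_m t' ht'Icc0T t' ⟨by linarith, le_refl _⟩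
    have hmeq : sSup (v '' Set.Icc (t' - r) t') = v t' := le_antisymm hmle hmge
    have hvt'pos : 0 < v t' := by linarith
    have ht'Ioo : t' ∈ Set.Ioo (0:ℝ) T := ⟨by linarith [ht₀.1], by linarith [ht'Icc.2, hs₁.2]⟩
    have hrazc : deriv v t' ≤ -α (v t') := by
      apply hraz t' ht'Ioo
      rw [hmeq]
      exact (hsg (v t') hvt'pos).le
    have hαp : 0 < α (v t') := hαpos _ hvt'pos
    -- derivative at t' is nonnegative (left slopes are nonneg)
    have hder : HasDerivAt v (deriv v t') t' := (hvdiff t' ht'Ioo).hasDerivAt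
    have hslope : Filter.Tendsto (slope v t') (nhdsWithin t' {t'}ᶜ) (nhds (deriv v t')) :=
      hasDerivAt_iff_tendsto_slope.1 hder
    have htend : Filter.Tendsto (slope v t') (nhdsWithin t' (Set.Iio t')) (nhds (deriv v t')) :=
      hslope.mono_left (nhdsWithin_mono _ (fun u hu => ne_of_lt hu))
    have hev2 : ∀ᶠ u in nhdsWithin t' (Set.Iio t'), 0 ≤ slope v t' u := by
      filter_upwards [Ioo_mem_nhdsLT_of_mem (Set.mem_Ioc.2 ⟨ht₀t', le_refl _⟩)] with u hu
      have hvu : v u < v t' := by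
        have := hlt u ⟨hu.1.le, by linarith [hu.2, ht'Icc.2]⟩ hu.2
        linarith
      rw [slope_def_field]
      apply div_nonneg_of_nonpos <;> linarith [hu.2]
    have : 0 ≤ deriv v t' := ge_of_tendsto htend hev2
    linarith
  refine ⟨?_, ?_⟩
  · intro t₁ h1 t₂ h2 h12
    refine csSup_le ((hne t₂).image v) ?_
    rintro x ⟨u, hu, rfl⟩
    rcases le_or_gt u t₁ with h | h
    · exact hle_m t₁ h1 u ⟨by linarith [hu.1], h⟩
    · exact key t₁ h1 u ⟨h.le, le_trans hu.2 h2.2⟩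
  · intro t ht
    have := key 0 ⟨le_refl 0, hT.le⟩ t ht
    rwa [zero_sub] at this
end

section
/- Halanay-type inequality: let r > 0 and λ₁ > λ₂ ≥ 0, and let λ̄ > 0 be the unique positive root of λ̄ − λ₁ + λ₂·e^{λ̄ r} = 0. Let v : [−r, ∞) → [0,∞) be continuous on [−r,∞) and differentiable on (0,∞), and suppose that v′(t) ≤ −λ₁·v(t) + λ₂·sup_{s∈[t−r,t]} v(s) for all t > 0. Then for every λ ∈ (0, λ̄), v(t) ≤ ( sup_{s∈[−r,0]} v(s) )·e^{−λ t} for all t ≥ 0. -/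
open Set Filter Topology

/-- Halanay-type inequality (continuous core of Part 2 of the proof of Theorem 6):
if `v' (t) ≤ -λ₁ v(t) + λ₂ sup_{s ∈ [t-r,t]} v(s)` for `t > 0` with `λ₁ > λ₂ ≥ 0`, and
`λ̄ > 0` is the unique positive root of `λ̄ - λ₁ + λ₂ e^{λ̄ r} = 0`, then for every
`λ ∈ (0, λ̄)`, `v(t) ≤ (sup_{s ∈ [-r,0]} v(s)) e^{-λ t}` for all `t ≥ 0`. -/
theorem halanay_inequality (r lam1 lam2 : ℝ) (hr : 0 < r)
    (hlam : lam1 > lam2) (hlam2 : 0 ≤ lam2)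
    (lamBar : ℝ) (hlamBar : 0 < lamBar)
    (hroot : lamBar - lam1 + lam2 * Real.exp (lamBar * r) = 0)
    (v : ℝ → ℝ)
    (hvnn : ∀ t ∈ Set.Ici (-r), 0 ≤ v t)
    (hvcont : ContinuousOn v (Set.Ici (-r)))
    (hvdiff : ∀ t : ℝ, 0 < t → DifferentiableAt ℝ v t)
    (hflow : ∀ t : ℝ, 0 < t →
      deriv v t ≤ -lam1 * v t + lam2 * sSup (v '' Set.Icc (t - r) t)) :
    ∀ lam : ℝ, 0 < lam → lam < lamBar →
      ∀ t : ℝ, 0 ≤ t → v t ≤ sSup (v '' Set.Icc (-r) 0) * Real.exp (-lam * t) := by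
  intro lam hlam0 hlamlt t₀ ht₀
  set M := sSup (v '' Set.Icc (-r) 0) with hMdef
  have hrneg : (-r : ℝ) ≤ 0 := by linarith
  have hbdd : BddAbove (v '' Set.Icc (-r) 0) :=
    (isCompact_Icc.image_of_continuousOn
      (hvcont.mono (fun x hx => hx.1))).bddAbove
  have hMle : ∀ s ∈ Set.Icc (-r) 0, v s ≤ M := fun s hs => le_csSup hbdd ⟨s, hs, rfl⟩
  have hM0 : 0 ≤ M := le_trans (hvnn 0 hrneg) (hMle 0 ⟨hrneg, le_refl 0⟩)
  -- the key root inequality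
  have hg : lam - lam1 + lam2 * Real.exp (lam * r) < 0 := by
    have hexp : Real.exp (lam * r) ≤ Real.exp (lamBar * r) :=
      Real.exp_le_exp.mpr (by nlinarith)
    nlinarith [mul_le_mul_of_nonneg_left hexp hlam2]
  suffices h : ∀ ε > 0, v t₀ ≤ (M + ε) * Real.exp (-lam * t₀) by
    have key : v t₀ * Real.exp (lam * t₀) ≤ M := by
      by_contra hcon
      push_neg at hcon
      set ε := (v t₀ * Real.exp (lam * t₀) - M) / 2 with hεdef
      have hε : 0 < ε := by simp only [hεdef]; linarith
      have h1 := h ε hε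
      have h2 : v t₀ * Real.exp (lam * t₀) ≤ M + ε := by
        have := mul_le_mul_of_nonneg_right h1 (Real.exp_pos (lam * t₀)).le
        calc v t₀ * Real.exp (lam * t₀) ≤ (M + ε) * Real.exp (-lam * t₀) * Real.exp (lam * t₀) := this
          _ = M + ε := by
              rw [mul_assoc, ← Real.exp_add, show -lam * t₀ + lam * t₀ = 0 by ring,
                Real.exp_zero, mul_one]
      simp only [hεdef] at h2; linarith
    have := mul_le_mul_of_nonneg_right key (Real.exp_pos (-lam * t₀)).le
    calc v t₀ = v t₀ * Real.exp (lam * t₀) * Real.exp (-lam * t₀) := by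
          rw [mul_assoc, ← Real.exp_add, show lam * t₀ + -lam * t₀ = 0 by ring,
            Real.exp_zero, mul_one]
      _ ≤ M * Real.exp (-lam * t₀) := this
  intro ε hε
  by_contra hcon
  push_neg at hcon
  have hMε : (0:ℝ) < M + ε := by linarith
  set S := {t : ℝ | t ∈ Set.Icc 0 t₀ ∧ (M + ε) * Real.exp (-lam * t) ≤ v t} with hSdef
  have ht₀S : t₀ ∈ S := ⟨⟨ht₀, le_refl _⟩, hcon.le⟩
  have hSbdd : BddBelow S := ⟨0, fun t ht => ht.1.1⟩
  have hScl : IsClosed S := by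
    have hsub : Set.Icc (0:ℝ) t₀ ⊆ Set.Ici (-r) := fun x hx => le_trans hrneg hx.1
    have hφ : ContinuousOn (fun t => v t - (M + ε) * Real.exp (-lam * t)) (Set.Icc 0 t₀) :=
      (hvcont.mono hsub).sub
        ((continuous_const.mul ((Real.continuous_exp).comp
          (continuous_const.mul continuous_id))).continuousOn)
    have := hφ.preimage_isClosed_of_isClosed isClosed_Icc (isClosed_Ici (a := (0:ℝ)))
    convert this using 1
    ext t
    simp only [hSdef, Set.mem_setOf_eq, Set.mem_inter_iff, Set.mem_preimage, Set.mem_Ici,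
      sub_nonneg]
  set c := sInf S with hcdef
  have hcS : c ∈ S := hScl.csInf_mem ⟨t₀, ht₀S⟩ hSbdd
  have hcmin : ∀ t ∈ S, c ≤ t := fun t ht => csInf_le hSbdd ht
  have hcpos : 0 < c := by
    rcases lt_or_eq_of_le hcS.1.1 with h | h
    · exact h
    · exfalso
      have := hcS.2
      rw [← h] at this
      simp only [mul_zero, neg_zero, Real.exp_zero, mul_one] at this
      have := hMle 0 ⟨hrneg, le_refl 0⟩
      linarith
  have hbelow : ∀ s : ℝ, 0 ≤ s → s < c → v s < (M + ε) * Real.exp (-lam * s) := by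
    intro s hs0 hsc
    by_contra hcon2
    push_neg at hcon2
    exact absurd (hcmin s ⟨⟨hs0, le_trans hsc.le hcS.1.2⟩, hcon2⟩) (not_le.mpr hsc)
  have hAllne : ∀ s ∈ Set.Icc (-r) c, s ≠ c → v s ≤ (M + ε) * Real.exp (-lam * s) := by
    intro s hs hne
    rcases le_or_gt s 0 with h0 | h0
    · have h1 : v s ≤ M := hMle s ⟨hs.1, h0⟩
      have h2 : (1:ℝ) ≤ Real.exp (-lam * s) := Real.one_le_exp (by nlinarith)
      nlinarith
    · exact (hbelow s h0.le (lt_of_le_of_ne hs.2 hne)).le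
  -- left limit gives v c ≤ bound c
  have hvc_le : v c ≤ (M + ε) * Real.exp (-lam * c) := by
    have hmem : Set.Ici (-r) ∈ 𝓝 c := Ici_mem_nhds (by linarith)
    have hcv : Tendsto v (𝓝[Set.Iio c] c) (𝓝 (v c)) :=
      (hvcont.continuousWithinAt (by simp only [Set.mem_Ici]; linarith)).mono_left
        (nhdsWithin_le_of_mem (mem_nhdsWithin_of_mem_nhds hmem))
    have hcb : Tendsto (fun s => (M + ε) * Real.exp (-lam * s)) (𝓝[Set.Iio c] c)
        (𝓝 ((M + ε) * Real.exp (-lam * c))) :=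
      ((continuous_const.mul ((Real.continuous_exp).comp
        (continuous_const.mul continuous_id))).tendsto c).mono_left nhdsWithin_le_nhds
    refine le_of_tendsto_of_tendsto hcv hcb ?_
    filter_upwards [self_mem_nhdsWithin,
      eventually_nhdsWithin_of_eventually_nhds (eventually_gt_nhds hcpos)] with s hs1 hs2
    exact (hbelow s hs2.le hs1).le
  have hvc : v c = (M + ε) * Real.exp (-lam * c) := le_antisymm hvc_le hcS.2
  have hAll : ∀ s ∈ Set.Icc (-r) c, v s ≤ (M + ε) * Real.exp (-lam * s) := by
    intro s hs
    by_cases hne : s = c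
    · rw [hne, hvc]
    · exact hAllne s hs hne
  -- estimate the delayed supremum
  have hsup : sSup (v '' Set.Icc (c - r) c) ≤ (M + ε) * Real.exp (-lam * (c - r)) := by
    apply Real.sSup_le
    · rintro x ⟨s, hs, rfl⟩
      have h1 : v s ≤ (M + ε) * Real.exp (-lam * s) :=
        hAll s ⟨by linarith [hs.1], hs.2⟩
      have h2 : Real.exp (-lam * s) ≤ Real.exp (-lam * (c - r)) :=
        Real.exp_le_exp.mpr (by nlinarith [hs.1])
      calc v s ≤ (M + ε) * Real.exp (-lam * s) := h1
        _ ≤ (M + ε) * Real.exp (-lam * (c - r)) :=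
            mul_le_mul_of_nonneg_left h2 hMε.le
    · exact mul_nonneg hMε.le (Real.exp_pos _).le
  -- derivative setup
  have hb' : HasDerivAt (fun t => (M + ε) * Real.exp (-lam * t))
      ((M + ε) * (Real.exp (-lam * c) * -lam)) c := by
    have h1 : HasDerivAt (fun t : ℝ => -lam * t) (-lam) c := by
      simpa using (hasDerivAt_id c).const_mul (-lam)
    exact (h1.exp).const_mul (M + ε)
  have hv' : HasDerivAt v (deriv v c) c := (hvdiff c hcpos).hasDerivAt
  have hf : HasDerivAt (fun t => v t - (M + ε) * Real.exp (-lam * t))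
      (deriv v c - (M + ε) * (Real.exp (-lam * c) * -lam)) c := hv'.sub hb'
  -- derivative from the left is nonnegative
  have hd_nonneg : 0 ≤ deriv v c - (M + ε) * (Real.exp (-lam * c) * -lam) := by
    have hfW := hf.hasDerivWithinAt (s := Set.Iio c)
    rw [hasDerivWithinAt_iff_tendsto_slope,
      Set.diff_singleton_eq_self (by simp : c ∉ Set.Iio c)] at hfW
    refine ge_of_tendsto hfW ?_
    filter_upwards [self_mem_nhdsWithin,
      eventually_nhdsWithin_of_eventually_nhds (eventually_gt_nhds hcpos)] with s hs1 hs2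
    have hslt : s < c := hs1
    have hfs : v s - (M + ε) * Real.exp (-lam * s) ≤ 0 :=
      sub_nonpos.mpr (hbelow s hs2.le hslt).le
    have hfc : v c - (M + ε) * Real.exp (-lam * c) = 0 := sub_eq_zero.mpr hvc
    rw [slope_def_field, hfc, sub_zero]
    exact div_nonneg_of_nonpos hfs (by linarith)
  -- but the flow inequality forces it negative
  have hEpos : (0:ℝ) < Real.exp (-lam * c) := Real.exp_pos _
  have hflowc := hflow c hcpos
  have hsup' : lam2 * sSup (v '' Set.Icc (c - r) c) ≤
      lam2 * ((M + ε) * (Real.exp (-lam * c) * Real.exp (lam * r))) := by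
    have : Real.exp (-lam * (c - r)) = Real.exp (-lam * c) * Real.exp (lam * r) := by
      rw [← Real.exp_add]; ring_nf
    rw [← this]
    exact mul_le_mul_of_nonneg_left hsup hlam2
  have hderiv_le : deriv v c ≤
      (M + ε) * Real.exp (-lam * c) * (-lam1 + lam2 * Real.exp (lam * r)) := by
    have := hflowc
    rw [hvc] at this
    nlinarith
  have hfact : -lam1 + lam2 * Real.exp (lam * r) < -lam := by linarith
  nlinarith [mul_pos hMε hEpos,
    mul_lt_mul_of_pos_left hfact (mul_pos hMε hEpos)]
end

section
/- Hybrid Halanay estimate with jumps: under the hybrid-arc setup and the memory setup, assume λ₁ > λ₂ ≥ 0, μ ≥ 1, and let λ̄ > 0 be the unique positive root of λ̄ − λ₁ + λ₂·e^{λ̄ r} = 0 and fix λ ∈ (0, λ̄). Suppose that v_j′(t) ≤ −λ₁·v_j(t) + λ₂·sup_{σ∈[t−r,t]} w(σ) for all j ∈ ℕ and all t ∈ (t_j, t_{j+1}), and v_{j+1}(t_{j+1}) ≤ μ·v_j(t_{j+1}) for all j ∈ ℕ. Then for every j ∈ ℕ and every t ∈ [t_j, t_{j+1}], v_j(t) ≤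 μ^j·e^{−λ t}·sup_{σ∈[−r,0]} w(σ). -/
set_option maxHeartbeats 1000000

private lemma hhwj_locate (t : ℕ → ℝ) (htmono : Monotone t) (j : ℕ) (τ : ℝ)
    (h0 : t 0 ≤ τ) (hlt : τ < t (j + 1)) : ∃ k, k ≤ j ∧ t k ≤ τ ∧ τ < t (k + 1) := by
  induction j with
  | zero => exact ⟨0, le_refl _, h0, hlt⟩
  | succ n ih =>
    by_cases hc : τ < t (n + 1)
    · obtain ⟨k, hk, h1, h2⟩ := ih hc
      exact ⟨k, hk.trans (Nat.le_succ n), h1, h2⟩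
    · exact ⟨n + 1, le_refl _, not_lt.1 hc, hlt⟩


/-- Hybrid Halanay estimate with jumps (estimate (21) in Part 2 of the proof of Theorem 6):
under the delayed Halanay flow condition at rates `λ₁ > λ₂ ≥ 0` and multiplicative jump
bound `μ ≥ 1`, for every `λ ∈ (0, λ̄)` (with `λ̄` the unique positive root of
`λ̄ - λ₁ + λ₂ e^{λ̄ r} = 0`) one has `v j t ≤ μ^j e^{-λ t} sup_{σ ∈ [-r,0]} w(σ)`. -/
theorem hybrid_halanay_with_jumps
    -- hybrid-arc setup
    (t : ℕ → ℝ) (ht0 : t 0 = 0) (htmono : Monotone t)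
    (v : ℕ → ℝ → ℝ)
    (hvnn : ∀ j : ℕ, ∀ s ∈ Set.Icc (t j) (t (j + 1)), 0 ≤ v j s)
    (hvcont : ∀ j : ℕ, ContinuousOn (v j) (Set.Icc (t j) (t (j + 1))))
    (hvdiff : ∀ j : ℕ, ∀ s ∈ Set.Ioo (t j) (t (j + 1)), DifferentiableAt ℝ (v j) s)
    -- memory setup
    (r : ℝ) (hr : 0 < r)
    (w : ℝ → ℝ)
    (hwnn : ∀ s ∈ Set.Icc (-r) (0 : ℝ), 0 ≤ w s)
    (hwcont : ContinuousOn w (Set.Icc (-r) 0))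
    (hw0 : w 0 = v 0 0)
    (hwagree : ∀ j : ℕ, ∀ s ∈ Set.Ico (t j) (t (j + 1)), w s = v j s)
    -- Halanay data
    (lam1 lam2 mu : ℝ) (hlam : lam1 > lam2) (hlam2 : 0 ≤ lam2) (hmu : 1 ≤ mu)
    (lamBar : ℝ) (hlamBar : 0 < lamBar)
    (hroot : lamBar - lam1 + lam2 * Real.exp (lamBar * r) = 0)
    (lam : ℝ) (hlam0 : 0 < lam) (hlamlt : lam < lamBar)
    (hflow : ∀ j : ℕ, ∀ s ∈ Set.Ioo (t j) (t (j + 1)),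
      deriv (v j) s ≤ -lam1 * v j s + lam2 * sSup (w '' Set.Icc (s - r) s))
    (hjump : ∀ j : ℕ, v (j + 1) (t (j + 1)) ≤ mu * v j (t (j + 1))) :
    ∀ j : ℕ, ∀ s ∈ Set.Icc (t j) (t (j + 1)),
      v j s ≤ mu ^ j * Real.exp (-lam * s) * sSup (w '' Set.Icc (-r) 0) := by
  have hmu0 : (0:ℝ) ≤ mu := le_trans zero_le_one hmu
  have htj0 : ∀ j, (0:ℝ) ≤ t j := fun j => ht0 ▸ htmono (Nat.zero_le j)
  set M := sSup (w '' Set.Icc (-r) 0) with hMdef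
  have h0mem : (0:ℝ) ∈ Set.Icc (-r) 0 := ⟨neg_nonpos.2 hr.le, le_refl 0⟩
  have hbdd : BddAbove (w '' Set.Icc (-r) 0) :=
    (isCompact_Icc.image_of_continuousOn hwcont).bddAbove
  have hwleM : ∀ τ ∈ Set.Icc (-r) (0:ℝ), w τ ≤ M := fun τ hτ => le_csSup hbdd ⟨τ, hτ, rfl⟩
  have hMnn : 0 ≤ M := (hwnn 0 h0mem).trans (hwleM 0 h0mem)
  -- strict root inequality at lam
  have hδ : lam2 * Real.exp (lam * r) < lam1 - lam := by
    have h1 : lam2 * Real.exp (lam * r) ≤ lam2 * Real.exp (lamBar * r) := by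
      apply mul_le_mul_of_nonneg_left _ hlam2
      exact Real.exp_le_exp.2 (by nlinarith)
    nlinarith
  have ha : 0 < lam1 - lam := by nlinarith [mul_nonneg hlam2 (Real.exp_pos (lam * r)).le]
  intro j
  induction j using Nat.strong_induction_on with
  | _ j IH =>
  intro s hs
  set C := mu ^ j * M with hCdef
  have hpowj : (1:ℝ) ≤ mu ^ j := by simpa using pow_le_pow_right₀ hmu (Nat.zero_le j)
  have hCnn : 0 ≤ C := mul_nonneg (by positivity) hMnn
  have hMC : M ≤ C := le_mul_of_one_le_left hMnn hpowj
  -- start bound at t j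
  have hstart : v j (t j) ≤ mu ^ j * Real.exp (-lam * t j) * M := by
    cases j with
    | zero =>
      have h1 : v 0 0 ≤ M := by rw [← hw0]; exact hwleM 0 h0mem
      rw [ht0]
      simpa using h1
    | succ k =>
      have h2 := IH k (Nat.lt_succ_self k) (t (k + 1)) ⟨htmono (Nat.le_succ k), le_refl _⟩
      calc v (k + 1) (t (k + 1)) ≤ mu * v k (t (k + 1)) := hjump k
        _ ≤ mu * (mu ^ k * Real.exp (-lam * t (k + 1)) * M) := mul_le_mul_of_nonneg_left h2 hmu0
        _ = mu ^ (k + 1) * Real.exp (-lam * t (k + 1)) * M := by ring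
  -- the epsilon claim
  have claim : ∀ ε : ℝ, 0 < ε → ∀ σ ∈ Set.Icc (t j) (t (j + 1)),
      v j σ * Real.exp (lam * σ) < C + ε := by
    intro ε hε
    have hCε : 0 < C + ε := by linarith
    set h : ℝ → ℝ := fun x => v j x * Real.exp (lam * x) with hh
    have hhcont : ContinuousOn h (Set.Icc (t j) (t (j + 1))) :=
      (hvcont j).mul ((by fun_prop : Continuous fun x : ℝ => Real.exp (lam * x)).continuousOn)
    by_contra hcon
    push_neg at hcon
    obtain ⟨σ₁, hσ₁, hge⟩ := hcon
    set B := Set.Icc (t j) (t (j + 1)) ∩ h ⁻¹' Set.Ici (C + ε) with hBdef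
    have hBne : B.Nonempty := ⟨σ₁, hσ₁, hge⟩
    have hBclosed : IsClosed B := hhcont.preimage_isClosed_of_isClosed isClosed_Icc isClosed_Ici
    have hBbdd : BddBelow B := ⟨t j, fun x hx => hx.1.1⟩
    set s₁ := sInf B with hs₁def
    have hs₁B : s₁ ∈ B := hBclosed.csInf_mem hBne hBbdd
    have hs₁Icc : s₁ ∈ Set.Icc (t j) (t (j + 1)) := hs₁B.1
    have hhs₁ : C + ε ≤ h s₁ := hs₁B.2
    -- value at t j
    have hhtj : h (t j) ≤ C := by
      have h2 := mul_le_mul_of_nonneg_right hstart (Real.exp_pos (lam * t j)).le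
      have heq : mu ^ j * Real.exp (-lam * t j) * M * Real.exp (lam * t j) = mu ^ j * M := by
        rw [neg_mul, Real.exp_neg]
        field_simp
      rw [heq] at h2
      simpa [hh] using h2
    -- everything strictly below C+ε before s₁
    have hleft : ∀ τ, t j ≤ τ → τ < s₁ → h τ < C + ε := by
      intro τ h1 h2
      by_contra hcc
      have hmem : τ ∈ B := ⟨⟨h1, h2.le.trans hs₁Icc.2⟩, not_lt.1 hcc⟩
      exact absurd (csInf_le hBbdd hmem) (not_le.2 h2)
    -- constants
    have hδpos : 0 < (lam1 - lam) - lam2 * Real.exp (lam * r) := sub_pos.2 hδ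
    set η := min (((lam1 - lam) - lam2 * Real.exp (lam * r)) * (C + ε) / (2 * (lam1 - lam))) ε
      with hηdef
    have hηpos : 0 < η := lt_min (div_pos (mul_pos hδpos hCε) (by linarith)) hε
    have hηε : η ≤ ε := min_le_right _ _
    have haη : (lam1 - lam) * η ≤ ((lam1 - lam) - lam2 * Real.exp (lam * r)) * (C + ε) / 2 := by
      have h1 : η ≤ ((lam1 - lam) - lam2 * Real.exp (lam * r)) * (C + ε) / (2 * (lam1 - lam)) :=
        min_le_left _ _
      have h2 := mul_le_mul_of_nonneg_left h1 ha.le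
      calc (lam1 - lam) * η
          ≤ (lam1 - lam) * (((lam1 - lam) - lam2 * Real.exp (lam * r)) * (C + ε) /
              (2 * (lam1 - lam))) := h2
        _ = ((lam1 - lam) - lam2 * Real.exp (lam * r)) * (C + ε) / 2 := by
            field_simp
    -- the last point below C+ε-η
    set G := Set.Icc (t j) s₁ ∩ h ⁻¹' Set.Iic (C + ε - η) with hGdef
    have hGne : G.Nonempty := ⟨t j, ⟨le_refl _, hs₁Icc.1⟩, by
      show h (t j) ≤ C + ε - η
      linarith⟩
    have hGclosed : IsClosed G :=
      (hhcont.mono (Set.Icc_subset_Icc_right hs₁Icc.2)).preimage_isClosed_of_isClosed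
        isClosed_Icc isClosed_Iic
    have hGbdd : BddAbove G := ⟨s₁, fun x hx => hx.1.2⟩
    set s₀ := sSup G with hs₀def
    have hs₀G : s₀ ∈ G := hGclosed.csSup_mem hGne hGbdd
    have hs₀le : h s₀ ≤ C + ε - η := hs₀G.2
    have hs₀tj : t j ≤ s₀ := hs₀G.1.1
    have hs₀lt : s₀ < s₁ := by
      rcases lt_or_eq_of_le hs₀G.1.2 with hlt | heq
      · exact hlt
      · rw [heq] at hs₀le; linarith
    have hmid : ∀ σ, s₀ < σ → σ ≤ s₁ → C + ε - η < h σ := by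
      intro σ h1 h2
      by_contra hcc
      have hmem : σ ∈ G := ⟨⟨hs₀tj.trans h1.le, h2⟩, not_lt.1 hcc⟩
      exact absurd (le_csSup hGbdd hmem) (not_le.2 h1)
    -- derivative negative on (s₀, s₁)
    have hderiv : ∀ σ ∈ Set.Ioo s₀ s₁, deriv h σ < 0 := by
      rintro σ ⟨hσ1, hσ2⟩
      have hσIoo : σ ∈ Set.Ioo (t j) (t (j + 1)) :=
        ⟨lt_of_le_of_lt hs₀tj hσ1, lt_of_lt_of_le hσ2 hs₁Icc.2⟩
      have hee : Real.exp (-lam * σ) * Real.exp (lam * σ) = 1 := by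
        rw [← Real.exp_add]
        have : -lam * σ + lam * σ = 0 := by ring
        rw [this, Real.exp_zero]
      -- sup bound
      have hS : sSup (w '' Set.Icc (σ - r) σ)
          ≤ (C + ε) * Real.exp (lam * r) * Real.exp (-lam * σ) := by
        apply Real.sSup_le
        · rintro y ⟨τ, hτ, rfl⟩
          have hτb : w τ ≤ (C + ε) * Real.exp (-lam * τ) := by
            rcases le_or_gt τ 0 with hτ0 | hτ0
            · have hτr : -r ≤ τ := by
                have := hτ.1; have := hσIoo.1; have := htj0 j; linarith
              have h1 : w τ ≤ M := hwleM τ ⟨hτr, hτ0⟩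
              have h2 : (1:ℝ) ≤ Real.exp (-lam * τ) := by
                apply Real.one_le_exp
                nlinarith
              calc w τ ≤ M := h1
                _ ≤ C + ε := by linarith
                _ ≤ (C + ε) * Real.exp (-lam * τ) := le_mul_of_one_le_right hCε.le h2
            · have hτlt : τ < t (j + 1) := lt_of_le_of_lt hτ.2 (lt_of_lt_of_le hσ2 hs₁Icc.2)
              obtain ⟨k, hkj, hk1, hk2⟩ := hhwj_locate t htmono j τ (ht0 ▸ hτ0.le) hτlt
              have hwτ : w τ = v k τ := hwagree k τ ⟨hk1, hk2⟩
              rcases lt_or_eq_of_le hkj with hklt | hkeq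
              · have hIk := IH k hklt τ ⟨hk1, hk2.le⟩
                calc w τ = v k τ := hwτ
                  _ ≤ mu ^ k * Real.exp (-lam * τ) * M := hIk
                  _ ≤ mu ^ j * Real.exp (-lam * τ) * M := by
                      apply mul_le_mul_of_nonneg_right _ hMnn
                      exact mul_le_mul_of_nonneg_right (pow_le_pow_right₀ hmu hkj)
                        (Real.exp_pos _).le
                  _ ≤ (C + ε) * Real.exp (-lam * τ) := by
                      have heq : mu ^ j * Real.exp (-lam * τ) * M
                          = (mu ^ j * M) * Real.exp (-lam * τ) := by ring
                      rw [heq]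
                      apply mul_le_mul_of_nonneg_right _ (Real.exp_pos _).le
                      rw [hCdef]; linarith
              · subst hkeq
                have hτs₁ : τ < s₁ := lt_of_le_of_lt hτ.2 hσ2
                have h1 : h τ < C + ε := hleft τ hk1 hτs₁
                rw [hwτ, neg_mul, Real.exp_neg, ← div_eq_mul_inv, le_div_iff₀ (Real.exp_pos _)]
                exact h1.le
          have hτe : Real.exp (-lam * τ) ≤ Real.exp (lam * r) * Real.exp (-lam * σ) := by
            rw [← Real.exp_add]
            apply Real.exp_le_exp.2
            have := mul_le_mul_of_nonneg_left hτ.1 hlam0.le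
            nlinarith
          calc w τ ≤ (C + ε) * Real.exp (-lam * τ) := hτb
            _ ≤ (C + ε) * (Real.exp (lam * r) * Real.exp (-lam * σ)) :=
                mul_le_mul_of_nonneg_left hτe hCε.le
            _ = (C + ε) * Real.exp (lam * r) * Real.exp (-lam * σ) := by ring
        · positivity
      have hSe : sSup (w '' Set.Icc (σ - r) σ) * Real.exp (lam * σ)
          ≤ (C + ε) * Real.exp (lam * r) := by
        have h2 := mul_le_mul_of_nonneg_right hS (Real.exp_pos (lam * σ)).le
        calc sSup (w '' Set.Icc (σ - r) σ) * Real.exp (lam * σ)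
            ≤ (C + ε) * Real.exp (lam * r) * Real.exp (-lam * σ) * Real.exp (lam * σ) := h2
          _ = (C + ε) * Real.exp (lam * r) * (Real.exp (-lam * σ) * Real.exp (lam * σ)) := by
              ring
          _ = (C + ε) * Real.exp (lam * r) := by rw [hee, mul_one]
      -- derivative of h
      have hd1 : HasDerivAt (v j) (deriv (v j) σ) σ := (hvdiff j σ hσIoo).hasDerivAt
      have hd2 : HasDerivAt (fun x => Real.exp (lam * x)) (Real.exp (lam * σ) * lam) σ := by
        simpa using ((hasDerivAt_id σ).const_mul lam).exp
      have hdh : HasDerivAt h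
          (deriv (v j) σ * Real.exp (lam * σ) + v j σ * (Real.exp (lam * σ) * lam)) σ :=
        hd1.mul hd2
      rw [hdh.deriv]
      have hfl := hflow j σ hσIoo
      have h1 := mul_le_mul_of_nonneg_right hfl (Real.exp_pos (lam * σ)).le
      have hm : C + ε - η < v j σ * Real.exp (lam * σ) := hmid σ hσ1 hσ2.le
      have h3 := mul_lt_mul_of_pos_left hm ha
      have hSe2 := mul_le_mul_of_nonneg_left hSe hlam2
      have h5 : 0 < ((lam1 - lam) - lam2 * Real.exp (lam * r)) * (C + ε) := mul_pos hδpos hCε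
      linarith [h1, h3, hSe2, haη, h5]
    -- strict decrease contradiction
    have hanti : StrictAntiOn h (Set.Icc s₀ s₁) := by
      apply strictAntiOn_of_deriv_neg (convex_Icc _ _)
      · exact hhcont.mono (Set.Icc_subset_Icc hs₀tj hs₁Icc.2)
      · intro x hx
        rw [interior_Icc] at hx
        exact hderiv x hx
    have hlt := hanti (Set.left_mem_Icc.2 hs₀lt.le) (Set.right_mem_Icc.2 hs₀lt.le) hs₀lt
    linarith
  -- conclude from the claim
  apply le_of_forall_pos_le_add
  intro ε hε
  have hε' : 0 < ε * Real.exp (lam * s) := by positivity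
  have hcl := claim (ε * Real.exp (lam * s)) hε' s hs
  have hkey : v j s * Real.exp (lam * s)
      ≤ (mu ^ j * Real.exp (-lam * s) * M + ε) * Real.exp (lam * s) := by
    have heq : (mu ^ j * Real.exp (-lam * s) * M + ε) * Real.exp (lam * s)
        = mu ^ j * M + ε * Real.exp (lam * s) := by
      rw [neg_mul, Real.exp_neg]
      field_simp
    rw [heq, ← hCdef]
    exact hcl.le
  exact le_of_mul_le_mul_right hkey (Real.exp_pos (lam * s))
end

section
/- Hybrid Razumikhin boundedness: under the hybrid-arc setup and the memory setup, let α : [0,∞) → [0,∞) be positive definite, and let γ, ρ : [0,∞) → [0,∞) be continuous and nondecreasing with γ(s) < s and ρ(s) < s for all s > 0. Suppose that for all j ∈ ℕ and all t ∈ (t_j, t_{j+1}), v_j(t) ≥ γ( sup_{σ∈[t−r,t]} w(σ) ) implies v_j′(t) ≤ −α(v_j(t)), and that v_{j+1}(t_{j+1}) ≤ ρ( sup_{σ∈[t_{j+1}−r, t_{j+1}]} w(σ) ) for all j ∈ ℕ. Then the running maximum m(t) := sup_{σ∈[t−r,t]} w(σ) is nonincreasing on [0, sup_j t_j); in particular w(t)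 ≤ sup_{σ∈[−r,0]} w(σ) for all t ∈ [0, sup_j t_j). -/
open Set

/-- Hybrid Razumikhin boundedness (first claim in the proof of Theorem 1): under the
Razumikhin flow condition, the jump contraction through `ρ`, and the small gain conditions
`γ(s) < s` and `ρ(s) < s` for `s > 0`, the running maximum
`m(t) = sup_{σ ∈ [t-r,t]} w(σ)` is nonincreasing on `[0, sup_j t_j) = ⋃_j [t_j, t_{j+1})`;
in particular `w(t) ≤ sup_{σ ∈ [-r,0]} w(σ)` there. -/
theorem hybrid_razumikhin_boundedness
    -- hybrid-arc setup
    (t : ℕ → ℝ) (ht0 : t 0 = 0) (htmono : Monotone t)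
    (v : ℕ → ℝ → ℝ)
    (hvnn : ∀ j : ℕ, ∀ s ∈ Set.Icc (t j) (t (j + 1)), 0 ≤ v j s)
    (hvcont : ∀ j : ℕ, ContinuousOn (v j) (Set.Icc (t j) (t (j + 1))))
    (hvdiff : ∀ j : ℕ, ∀ s ∈ Set.Ioo (t j) (t (j + 1)), DifferentiableAt ℝ (v j) s)
    -- memory setup
    (r : ℝ) (hr : 0 < r)
    (w : ℝ → ℝ)
    (hwnn : ∀ s ∈ Set.Icc (-r) (0 : ℝ), 0 ≤ w s)
    (hwcont : ContinuousOn w (Set.Icc (-r) 0))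
    (hw0 : w 0 = v 0 0)
    (hwagree : ∀ j : ℕ, ∀ s ∈ Set.Ico (t j) (t (j + 1)), w s = v j s)
    -- positive definite α and small-gain γ, ρ
    (α : ℝ → ℝ) (hαcont : ContinuousOn α (Set.Ici 0)) (hα0 : α 0 = 0)
    (hαpos : ∀ s : ℝ, 0 < s → 0 < α s)
    (γ ρ : ℝ → ℝ)
    (hγnn : ∀ s : ℝ, 0 ≤ s → 0 ≤ γ s) (hρnn : ∀ s : ℝ, 0 ≤ s → 0 ≤ ρ s)
    (hγcont : ContinuousOn γ (Set.Ici 0)) (hρcont : ContinuousOn ρ (Set.Ici 0))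
    (hγmono : MonotoneOn γ (Set.Ici 0)) (hρmono : MonotoneOn ρ (Set.Ici 0))
    (hγsg : ∀ s : ℝ, 0 < s → γ s < s) (hρsg : ∀ s : ℝ, 0 < s → ρ s < s)
    -- Razumikhin flow condition and jump contraction
    (hflow : ∀ j : ℕ, ∀ s ∈ Set.Ioo (t j) (t (j + 1)),
      v j s ≥ γ (sSup (w '' Set.Icc (s - r) s)) → deriv (v j) s ≤ -α (v j s))
    (hjump : ∀ j : ℕ,
      v (j + 1) (t (j + 1)) ≤ ρ (sSup (w '' Set.Icc (t (j + 1) - r) (t (j + 1))))) :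
    AntitoneOn (fun s : ℝ => sSup (w '' Set.Icc (s - r) s))
      (⋃ j : ℕ, Set.Ico (t j) (t (j + 1))) ∧
    ∀ s ∈ ⋃ j : ℕ, Set.Ico (t j) (t (j + 1)), w s ≤ sSup (w '' Set.Icc (-r) 0) := by
  have htnn : ∀ j, (0:ℝ) ≤ t j := fun j => ht0 ▸ htmono (Nat.zero_le j)
  -- nonnegativity of w on [0, t (j+1))
  have hwnn2 : ∀ j : ℕ, ∀ x : ℝ, 0 ≤ x → x < t (j + 1) → 0 ≤ w x := by
    intro j
    induction j with
    | zero =>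
      intro x hx hxlt
      have hx0 : t 0 ≤ x := by rw [ht0]; exact hx
      rw [hwagree 0 x ⟨hx0, hxlt⟩]
      exact hvnn 0 x ⟨hx0, hxlt.le⟩
    | succ j ih =>
      intro x hx hxlt
      by_cases h : x < t (j + 1)
      · exact ih x hx h
      · push_neg at h
        rw [hwagree (j + 1) x ⟨h, hxlt⟩]
        exact hvnn (j + 1) x ⟨h, hxlt.le⟩
  -- boundedness of w on [-r, t (j+1))
  have hbdd0 : ∀ j : ℕ, BddAbove (w '' Ico (-r) (t (j + 1))) := by
    intro j
    induction j with
    | zero =>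
      have h1 : BddAbove (w '' Icc (-r) 0) := isCompact_Icc.bddAbove_image hwcont
      have h2 : BddAbove (v 0 '' Icc (t 0) (t 1)) :=
        isCompact_Icc.bddAbove_image (hvcont 0)
      refine (h1.union h2).mono ?_
      rintro _ ⟨z, hz, rfl⟩
      rcases le_or_gt z 0 with h | h
      · exact Set.mem_union_left _ (mem_image_of_mem _ ⟨hz.1, h⟩)
      · have hz0 : t 0 ≤ z := by rw [ht0]; exact h.le
        rw [hwagree 0 z ⟨hz0, hz.2⟩]
        exact Set.mem_union_right _ (mem_image_of_mem _ ⟨hz0, hz.2.le⟩)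
    | succ j ih =>
      have h2 : BddAbove (v (j + 1) '' Icc (t (j + 1)) (t (j + 2))) :=
        isCompact_Icc.bddAbove_image (hvcont (j + 1))
      refine (ih.union h2).mono ?_
      rintro _ ⟨z, hz, rfl⟩
      rcases lt_or_ge z (t (j + 1)) with h | h
      · exact Set.mem_union_left _ (mem_image_of_mem _ ⟨hz.1, h⟩)
      · rw [hwagree (j + 1) z ⟨h, hz.2⟩]
        exact Set.mem_union_right _ (mem_image_of_mem _ ⟨h, hz.2.le⟩)
  have hbdd : ∀ (j : ℕ) (x : ℝ), x < t (j + 1) → BddAbove (w '' Icc (-r) x) := by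
    intro j x hx
    exact (hbdd0 j).mono (image_mono (Icc_subset_Ico_right hx))
  have hbdd' : ∀ (j : ℕ) (x : ℝ), 0 ≤ x → x < t (j + 1) →
      BddAbove (w '' Icc (x - r) x) := by
    intro j x hx0 hx
    exact (hbdd j x hx).mono (image_mono (Icc_subset_Icc (by linarith) le_rfl))
  -- the key estimate
  have key : ∀ s : ℝ, 0 ≤ s → ∀ (j : ℕ) (u : ℝ), s ≤ u → u < t (j + 1) →
      w u ≤ sSup (w '' Icc (s - r) s) := by
    intro s hs
    set M := sSup (w '' Icc (s - r) s) with hMdef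
    -- flow invariance lemma
    have flow : ∀ (j : ℕ) (a b : ℝ), t j ≤ a → a ≤ b → b < t (j + 1) → 0 ≤ M →
        v j a ≤ M → (∀ z ∈ Icc (a - r) a, w z ≤ M) → v j b ≤ M := by
      intro j a b htja hab hbt hM0 hvaM Hpast
      by_contra hlt
      push_neg at hlt
      have hIccsub : Icc a b ⊆ Icc (t j) (t (j + 1)) := Icc_subset_Icc htja hbt.le
      have hcont : ContinuousOn (v j) (Icc a b) := (hvcont j).mono hIccsub
      obtain ⟨x0, hx0mem, hx0max⟩ :=
        isCompact_Icc.exists_isMaxOn (nonempty_Icc.mpr hab) hcont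
      have hmax : ∀ y ∈ Icc a b, v j y ≤ v j x0 := isMaxOn_iff.mp hx0max
      set P := v j x0 with hPdef
      have hMP : M < P := lt_of_lt_of_le hlt (hmax b ⟨hab, le_rfl⟩)
      have hP0 : 0 < P := lt_of_le_of_lt hM0 hMP
      have hγP : γ P < P := hγsg P hP0
      have hγPnn : 0 ≤ γ P := hγnn P hP0.le
      -- least maximizer
      set T := Icc a b ∩ v j ⁻¹' Ici P with hTdef
      have hTclosed : IsClosed T :=
        hcont.preimage_isClosed_of_isClosed isClosed_Icc isClosed_Ici
      have hTne : T.Nonempty := ⟨x0, hx0mem, Set.mem_preimage.mpr (Set.mem_Ici.mpr le_rfl)⟩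
      have hTbdd : BddBelow T := ⟨a, fun y hy => hy.1.1⟩
      set σ := sInf T with hσdef
      have hσT : σ ∈ T := hTclosed.csInf_mem hTne hTbdd
      have hσmem : σ ∈ Icc a b := hσT.1
      have hσP : P ≤ v j σ := hσT.2
      have hσP' : v j σ = P := le_antisymm (hmax σ hσmem) hσP
      have haσ : a < σ := by
        rcases eq_or_lt_of_le hσmem.1 with heq | h
        · exfalso; rw [← heq] at hσP; linarith
        · exact h
      -- continuity window to the left of σ
      have hcw : ContinuousWithinAt (v j) (Icc a b) σ := hcont.continuousWithinAt hσmem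
      have hev : v j ⁻¹' Ioi (γ P) ∈ nhdsWithin σ (Icc a b) := by
        apply hcw
        apply Ioi_mem_nhds
        rw [hσP']; exact hγP
      obtain ⟨U, hUopen, hσU, hUsub⟩ := mem_nhdsWithin.mp hev
      obtain ⟨δ, hδpos, hball⟩ := Metric.isOpen_iff.mp hUopen σ hσU
      set u1 := max a (σ - δ) with hu1def
      have hu1a : a ≤ u1 := le_max_left _ _
      have hu1δ : σ - δ ≤ u1 := le_max_right _ _
      have hu1σ : u1 < σ := max_lt haσ (by linarith)
      set u2 := (u1 + σ) / 2 with hu2def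
      have hu1u2 : u1 < u2 := by rw [hu2def]; linarith
      have hu2σ : u2 < σ := by rw [hu2def]; linarith
      have hau2 : a < u2 := lt_of_le_of_lt hu1a hu1u2
      have hwin : ∀ x, u2 ≤ x → x < σ → γ P < v j x := by
        intro x hx2 hxσ
        have hxU : x ∈ Metric.ball σ δ := by
          rw [Metric.mem_ball, Real.dist_eq, abs_of_nonpos (by linarith)]
          linarith
        have hxI : x ∈ Icc a b := ⟨(lt_of_lt_of_le hau2 hx2).le, hxσ.le.trans hσmem.2⟩
        exact hUsub ⟨hball hxU, hxI⟩
      have hlow : ∀ x, a ≤ x → x < σ → v j x < P := by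
        intro x hx1 hxσ
        have hxI : x ∈ Icc a b := ⟨hx1, hxσ.le.trans hσmem.2⟩
        by_contra hcon
        push_neg at hcon
        have : σ ≤ x := csInf_le hTbdd ⟨hxI, hcon⟩
        linarith
      have hmle : ∀ x, a < x → x < σ → sSup (w '' Icc (x - r) x) ≤ P := by
        intro x hax hxσ
        refine csSup_le ⟨w x, mem_image_of_mem _ ⟨by linarith, le_rfl⟩⟩ ?_
        rintro _ ⟨z, hz, rfl⟩
        rcases le_or_gt z a with h1 | h1
        · exact le_trans (Hpast z ⟨by linarith [hz.1], h1⟩) hMP.le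
        · have hz1 : t j ≤ z := le_trans htja h1.le
          have hz2 : z < t (j + 1) := lt_of_le_of_lt (hz.2.trans (hxσ.le.trans hσmem.2)) hbt
          rw [hwagree j z ⟨hz1, hz2⟩]
          exact hmax z ⟨h1.le, hz.2.trans (hxσ.le.trans hσmem.2)⟩
      have hderiv : ∀ x ∈ interior (Icc u2 σ), deriv (v j) x < 0 := by
        intro x hx
        rw [interior_Icc] at hx
        have hx2 : u2 ≤ x := hx.1.le
        have hxσ : x < σ := hx.2
        have hax : a < x := lt_of_lt_of_le hau2 hx2
        have hxlt : x < t (j + 1) := lt_of_lt_of_le (hxσ.trans_le hσmem.2) hbt.le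
        have hx0 : (0:ℝ) ≤ x := le_trans (htnn j) (htja.trans hax.le)
        have hγPx : γ P < v j x := hwin x hx2 hxσ
        have hvx0 : 0 < v j x := lt_of_le_of_lt hγPnn hγPx
        have hmx_bdd : BddAbove (w '' Icc (x - r) x) := hbdd' j x hx0 hxlt
        have hmx_nn : 0 ≤ sSup (w '' Icc (x - r) x) :=
          le_trans (hwnn2 j x hx0 hxlt)
            (le_csSup hmx_bdd (mem_image_of_mem _ ⟨by linarith, le_rfl⟩))
        have hmxP : sSup (w '' Icc (x - r) x) ≤ P := hmle x hax hxσ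
        have hge : v j x ≥ γ (sSup (w '' Icc (x - r) x)) := by
          have := hγmono (Set.mem_Ici.mpr hmx_nn) (Set.mem_Ici.mpr hP0.le) hmxP
          linarith
        have hdle := hflow j x ⟨lt_of_le_of_lt htja hax, hxlt⟩ hge
        exact lt_of_le_of_lt hdle (neg_lt_zero.mpr (hαpos _ hvx0))
      have hanti : StrictAntiOn (v j) (Icc u2 σ) :=
        strictAntiOn_of_deriv_neg (convex_Icc u2 σ)
          (hcont.mono (Icc_subset_Icc hau2.le hσmem.2)) hderiv
      have h1 : v j σ < v j u2 :=
        hanti ⟨le_rfl, hu2σ.le⟩ ⟨hu2σ.le, le_rfl⟩ hu2σ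
      have h2 : v j u2 < P := hlow u2 hau2.le hu2σ
      rw [hσP'] at h1
      linarith
    -- induction over intervals
    have Q : ∀ j : ℕ, ∀ u : ℝ, s ≤ u → u < t j → w u ≤ M := by
      intro j
      induction j with
      | zero => intro u hsu hu; rw [ht0] at hu; linarith
      | succ j ih =>
        intro u hsu hu
        by_cases hcase : u < t j
        · exact ih u hsu hcase
        push_neg at hcase
        have hsu' : s < t (j + 1) := lt_of_le_of_lt hsu hu
        have hbddS : BddAbove (w '' Icc (s - r) s) := hbdd' j s hs hsu'
        have hwsM : w s ≤ M :=
          le_csSup hbddS (mem_image_of_mem _ ⟨by linarith, le_rfl⟩)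
        have hM0 : 0 ≤ M := le_trans (hwnn2 j s hs hsu') hwsM
        rcases le_or_gt (t j) s with hts | hst
        · -- the interval containing s
          have hws : w s = v j s := hwagree j s ⟨hts, hsu'⟩
          have hres := flow j s u hts hsu hu hM0 (hws ▸ hwsM)
            (fun z hz => le_csSup hbddS (mem_image_of_mem w hz))
          rw [hwagree j u ⟨le_trans hts hsu, hu⟩]
          exact hres
        · -- later interval: jump argument at t j
          have hj0 : j ≠ 0 := by intro h; rw [h, ht0] at hst; linarith
          obtain ⟨i, rfl⟩ := Nat.exists_eq_succ_of_ne_zero hj0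
          have htj_lt : t (i + 1) < t (i + 2) := lt_of_le_of_lt hcase hu
          have htj0 : (0:ℝ) ≤ t (i + 1) := htnn (i + 1)
          have hwtj : w (t (i + 1)) = v (i + 1) (t (i + 1)) :=
            hwagree (i + 1) (t (i + 1)) ⟨le_rfl, htj_lt⟩
          have hpast : ∀ z ∈ Ico (t (i + 1) - r) (t (i + 1)), w z ≤ M := by
            intro z hz
            rcases le_or_gt z s with h1 | h1
            · exact le_csSup hbddS (mem_image_of_mem _ ⟨by linarith [hz.1], h1⟩)
            · exact ih z h1.le hz.2
          have hq_bdd : BddAbove (w '' Icc (t (i + 1) - r) (t (i + 1))) :=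
            hbdd' (i + 1) (t (i + 1)) htj0 htj_lt
          have hq_ne : (w '' Icc (t (i + 1) - r) (t (i + 1))).Nonempty :=
            ⟨w (t (i + 1)), mem_image_of_mem _ ⟨by linarith, le_rfl⟩⟩
          have hwtjnn : 0 ≤ w (t (i + 1)) := hwnn2 (i + 1) (t (i + 1)) htj0 htj_lt
          have hwtj_le : w (t (i + 1)) ≤ M := by
            by_contra hcon
            push_neg at hcon
            set q := sSup (w '' Icc (t (i + 1) - r) (t (i + 1))) with hqdef
            have hqle : q ≤ w (t (i + 1)) := by
              apply csSup_le hq_ne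
              rintro _ ⟨z, hz, rfl⟩
              rcases eq_or_lt_of_le hz.2 with heq | hlt
              · rw [heq]
              · have := hpast z ⟨hz.1, hlt⟩
                linarith
            have hq0 : 0 ≤ q :=
              le_trans hwtjnn (le_csSup hq_bdd (mem_image_of_mem _ ⟨by linarith, le_rfl⟩))
            have hjv : v (i + 1) (t (i + 1)) ≤ ρ q := hjump i
            have h1 : w (t (i + 1)) ≤ ρ q := by rw [hwtj]; exact hjv
            have h2 : ρ q ≤ ρ (w (t (i + 1))) :=
              hρmono (Set.mem_Ici.mpr hq0) (Set.mem_Ici.mpr hwtjnn) hqle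
            have h3 : ρ (w (t (i + 1))) < w (t (i + 1)) :=
              hρsg _ (lt_of_le_of_lt hM0 hcon)
            linarith
          have hres := flow (i + 1) (t (i + 1)) u le_rfl hcase hu hM0
            (hwtj ▸ hwtj_le)
            (by
              intro z hz
              rcases eq_or_lt_of_le hz.2 with heq | hlt
              · rw [heq]; exact hwtj_le
              · exact hpast z ⟨hz.1, hlt⟩)
          rw [hwagree (i + 1) u ⟨hcase, hu⟩]
          exact hres
    intro j u hsu hu
    exact Q (j + 1) u hsu hu
  constructor
  · -- antitone
    intro x hx y hy hxy
    show sSup (w '' Icc (y - r) y) ≤ sSup (w '' Icc (x - r) x)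
    obtain ⟨k, hk⟩ := Set.mem_iUnion.mp hx
    obtain ⟨j, hj⟩ := Set.mem_iUnion.mp hy
    have hx0 : (0:ℝ) ≤ x := le_trans (htnn k) hk.1
    refine csSup_le ⟨w y, mem_image_of_mem _ ⟨by linarith, le_rfl⟩⟩ ?_
    rintro _ ⟨z, hz, rfl⟩
    rcases le_or_gt z x with h | h
    · exact le_csSup (hbdd' k x hx0 hk.2)
        (mem_image_of_mem _ ⟨by linarith [hz.1], h⟩)
    · exact key x hx0 j z h.le (lt_of_le_of_lt hz.2 hj.2)
  · intro x hx
    obtain ⟨j, hj⟩ := Set.mem_iUnion.mp hx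
    have h0x : (0:ℝ) ≤ x := le_trans (htnn j) hj.1
    have := key 0 le_rfl j x h0x hj.2
    rwa [zero_sub] at this
end

section
/- Hybrid Grönwall estimate with exponentially growing flow and multiplicative jumps: under the hybrid-arc setup, assume λ₁ > 0 and μ ≥ 0 are such that v_j′(t) ≤ λ₁·v_j(t) for all j ∈ ℕ and all t ∈ (t_j, t_{j+1}), and v_{j+1}(t_{j+1}) ≤ μ·v_j(t_{j+1}) for all j ∈ ℕ. Then v_j(t) ≤ μ^j·e^{λ₁ t}·v_0(0) for every j ∈ ℕ and every t ∈ [t_j, t_{j+1}]. -/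
open Set Filter Topology

lemma aux_gronwall_ioo {f : ℝ → ℝ} {a b K : ℝ}
    (hf : ContinuousOn f (Set.Icc a b))
    (hd : ∀ x ∈ Set.Ioo a b, DifferentiableAt ℝ f x)
    (hb : ∀ x ∈ Set.Ioo a b, deriv f x ≤ K * f x) :
    ∀ x ∈ Set.Icc a b, f x ≤ f a * Real.exp (K * (x - a)) := by
  intro x hx
  rcases eq_or_lt_of_le hx.1 with rfl | hax
  · simp
  -- for each a' ∈ Ioo a x, apply Grönwall on [a', x]
  have key : ∀ a' ∈ Set.Ioo a x, f x ≤ f a' * Real.exp (K * (x - a')) := by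
    intro a' ha'
    have hsub : Set.Icc a' x ⊆ Set.Icc a b :=
      Set.Icc_subset_Icc ha'.1.le hx.2
    have h := le_gronwallBound_of_liminf_deriv_right_le (f := f) (f' := deriv f)
      (δ := f a') (K := K) (ε := 0) (a := a') (b := x)
      (hf.mono hsub)
      (fun z hz r hr => by
        have hzmem : z ∈ Set.Ioo a b := ⟨lt_of_lt_of_le ha'.1 hz.1,
          lt_of_lt_of_le hz.2 hx.2⟩
        exact ((hd z hzmem).hasDerivAt.hasDerivWithinAt).liminf_right_slope_le hr)
      le_rfl
      (fun z hz => by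
        have hzmem : z ∈ Set.Ioo a b := ⟨lt_of_lt_of_le ha'.1 hz.1,
          lt_of_lt_of_le hz.2 hx.2⟩
        simpa using hb z hzmem)
      x ⟨ha'.2.le, le_rfl⟩
    rwa [gronwallBound_ε0] at h
  -- take the limit a' → a⁺
  have hne : (𝓝[Set.Ioo a x] a).NeBot := by
    rw [← mem_closure_iff_nhdsWithin_neBot, closure_Ioo hax.ne]
    exact ⟨le_rfl, hax.le⟩
  have hcont : Filter.Tendsto (fun a' => f a' * Real.exp (K * (x - a')))
      (𝓝[Set.Ioo a x] a) (𝓝 (f a * Real.exp (K * (x - a)))) := by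
    have h1 : Filter.Tendsto f (𝓝[Set.Ioo a x] a) (𝓝 (f a)) := by
      have := (hf.continuousWithinAt ⟨le_rfl, hax.le.trans hx.2⟩)
      exact this.tendsto.mono_left (nhdsWithin_mono a
        (fun z hz => ⟨hz.1.le, hz.2.le.trans hx.2⟩))
    exact h1.mul ((Real.continuous_exp.continuousAt.comp
      (by fun_prop : Continuous fun a' : ℝ => K * (x - a')).continuousAt).tendsto.mono_left
      nhdsWithin_le_nhds)
  exact ge_of_tendsto hcont (eventually_mem_nhdsWithin.mono fun a' ha' => key a' ha')

/-- Hybrid Grönwall estimate with exponentially growing flow and multiplicative jumps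
(core estimate in the proof of Theorem 4, and the `λ₂ = 0` case of (31) in Theorem 7):
`v j s ≤ μ^j · e^{λ₁ s} · v 0 0` on each flow interval. -/
theorem hybrid_gronwall_growth (t : ℕ → ℝ) (ht0 : t 0 = 0) (htmono : Monotone t)
    (v : ℕ → ℝ → ℝ)
    (hvnn : ∀ j : ℕ, ∀ s ∈ Set.Icc (t j) (t (j + 1)), 0 ≤ v j s)
    (hvcont : ∀ j : ℕ, ContinuousOn (v j) (Set.Icc (t j) (t (j + 1))))
    (hvdiff : ∀ j : ℕ, ∀ s ∈ Set.Ioo (t j) (t (j + 1)), DifferentiableAt ℝ (v j) s)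
    (lam1 mu : ℝ) (hlam1 : 0 < lam1) (hmu : 0 ≤ mu)
    (hflow : ∀ j : ℕ, ∀ s ∈ Set.Ioo (t j) (t (j + 1)), deriv (v j) s ≤ lam1 * v j s)
    (hjump : ∀ j : ℕ, v (j + 1) (t (j + 1)) ≤ mu * v j (t (j + 1))) :
    ∀ j : ℕ, ∀ s ∈ Set.Icc (t j) (t (j + 1)),
      v j s ≤ mu ^ j * Real.exp (lam1 * s) * v 0 0 := by
  intro j
  induction j with
  | zero =>
    intro s hs
    have h := aux_gronwall_ioo (hvcont 0) (hvdiff 0) (hflow 0) s hs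
    calc v 0 s ≤ v 0 0 * Real.exp (lam1 * (s - 0)) := by rwa [ht0] at h
      _ = mu ^ 0 * Real.exp (lam1 * s) * v 0 0 := by ring_nf
  | succ j ih =>
    intro s hs
    have h := aux_gronwall_ioo (hvcont (j + 1)) (hvdiff (j + 1)) (hflow (j + 1)) s hs
    have hjm : t (j + 1) ∈ Set.Icc (t j) (t (j + 1)) :=
      ⟨htmono (Nat.le_succ j), le_rfl⟩
    have h2 := hjump j
    have h3 := ih (t (j + 1)) hjm
    have hexp : (0:ℝ) ≤ Real.exp (lam1 * (s - t (j + 1))) := (Real.exp_pos _).le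
    calc v (j + 1) s ≤ v (j + 1) (t (j + 1)) * Real.exp (lam1 * (s - t (j + 1))) := h
      _ ≤ (mu * v j (t (j + 1))) * Real.exp (lam1 * (s - t (j + 1))) := by
          exact mul_le_mul_of_nonneg_right h2 hexp
      _ ≤ (mu * (mu ^ j * Real.exp (lam1 * t (j + 1)) * v 0 0)) *
            Real.exp (lam1 * (s - t (j + 1))) := by
          exact mul_le_mul_of_nonneg_right
            (mul_le_mul_of_nonneg_left h3 hmu) hexp
      _ = mu ^ (j + 1) * (Real.exp (lam1 * t (j + 1)) *
            Real.exp (lam1 * (s - t (j + 1)))) * v 0 0 := by ring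
      _ = mu ^ (j + 1) * Real.exp (lam1 * s) * v 0 0 := by
          rw [← Real.exp_add]; ring_nf
end

section
/- Hybrid delayed growth estimate with contracting jumps: under the hybrid-arc setup and the memory setup, assume λ₁ ≥ 0, λ₂ ≥ 0, μ ∈ (0,1), and assume K ∈ ℕ is such that for every t ≥ 0 the number of indices j ≥ 1 with t_j ∈ (t − r, t] is at most K. Let λ ≥ λ₁ + λ₂·μ^{−K}. Suppose that v_j′(t) ≤ λ₁·v_j(t) + λ₂·sup_{σ∈[t−r,t]} w(σ) for all j ∈ ℕ and all t ∈ (t_j, t_{j+1}), and v_{j+1}(t_{j+1}) ≤ μ·v_j(t_{j+1}) for all j ∈ ℕ. Then for every j ∈ ℕ and every t ∈ [t_j, t_{j+1}], v_j(t) ≤ μ^j·e^{λ t}·sup_{σ∈[−r,0]} w(σ). -/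
/-- Hybrid delayed growth estimate with contracting jumps (estimate (31) in Step 1 of the
proof of Theorem 7): under the delayed growth condition on flows, the contraction
`μ ∈ (0,1)` at jumps, and at most `K` jumps in any memory window of length `r`, for
`λ ≥ λ₁ + λ₂ μ^{-K}` one has `v j t ≤ μ^j e^{λ t} sup_{σ ∈ [-r,0]} w(σ)`. -/
theorem hybrid_delayed_growth
    -- hybrid-arc setup
    (t : ℕ → ℝ) (ht0 : t 0 = 0) (htmono : Monotone t)
    (v : ℕ → ℝ → ℝ)
    (hvnn : ∀ j : ℕ, ∀ s ∈ Set.Icc (t j) (t (j + 1)), 0 ≤ v j s)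
    (hvcont : ∀ j : ℕ, ContinuousOn (v j) (Set.Icc (t j) (t (j + 1))))
    (hvdiff : ∀ j : ℕ, ∀ s ∈ Set.Ioo (t j) (t (j + 1)), DifferentiableAt ℝ (v j) s)
    -- memory setup
    (r : ℝ) (hr : 0 < r)
    (w : ℝ → ℝ)
    (hwnn : ∀ s ∈ Set.Icc (-r) (0 : ℝ), 0 ≤ w s)
    (hwcont : ContinuousOn w (Set.Icc (-r) 0))
    (hw0 : w 0 = v 0 0)
    (hwagree : ∀ j : ℕ, ∀ s ∈ Set.Ico (t j) (t (j + 1)), w s = v j s)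
    -- growth/jump data
    (lam1 lam2 mu : ℝ) (hlam1 : 0 ≤ lam1) (hlam2 : 0 ≤ lam2)
    (hmu0 : 0 < mu) (hmu1 : mu < 1)
    (K : ℕ)
    (hK : ∀ s : ℝ, 0 ≤ s →
      {j : ℕ | 1 ≤ j ∧ t j ∈ Set.Ioc (s - r) s}.encard ≤ (K : ℕ∞))
    (lam : ℝ) (hlam : lam ≥ lam1 + lam2 * (mu ^ K)⁻¹)
    (hflow : ∀ j : ℕ, ∀ s ∈ Set.Ioo (t j) (t (j + 1)),
      deriv (v j) s ≤ lam1 * v j s + lam2 * sSup (w '' Set.Icc (s - r) s))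
    (hjump : ∀ j : ℕ, v (j + 1) (t (j + 1)) ≤ mu * v j (t (j + 1))) :
    ∀ j : ℕ, ∀ s ∈ Set.Icc (t j) (t (j + 1)),
      v j s ≤ mu ^ j * Real.exp (lam * s) * sSup (w '' Set.Icc (-r) 0) := by
  classical
  set M := sSup (w '' Set.Icc (-r) 0) with hMdef
  have hMbdd : BddAbove (w '' Set.Icc (-r) 0) := isCompact_Icc.bddAbove_image hwcont
  have hMnn : 0 ≤ M := Real.sSup_nonneg (by rintro x ⟨σ, hσ, rfl⟩; exact hwnn σ hσ)
  have hw0M : w 0 ≤ M := le_csSup hMbdd ⟨0, ⟨by linarith, le_refl 0⟩, rfl⟩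
  have htnn : ∀ j, 0 ≤ t j := fun j => ht0 ▸ htmono (Nat.zero_le j)
  have hlamnn : 0 ≤ lam :=
    le_trans (add_nonneg hlam1 (mul_nonneg hlam2 (inv_nonneg.2 (pow_nonneg hmu0.le K)))) hlam
  -- the key strict estimate, with margin δ
  have key : ∀ δ : ℝ, 0 < δ → ∀ j : ℕ, ∀ s ∈ Set.Icc (t j) (t (j + 1)),
      v j s < mu ^ j * Real.exp ((lam + δ) * s) * (M + δ) := by
    intro δ hδ
    have hld : 0 < lam + δ := by linarith
    intro j
    induction j using Nat.strong_induction_on with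
    | _ j IH =>
      -- strict bound at the left endpoint
      have hinit : v j (t j) < mu ^ j * Real.exp ((lam + δ) * t j) * (M + δ) := by
        cases j with
        | zero =>
          have hv0 : v 0 (t 0) = w 0 := by rw [ht0, hw0]
          rw [hv0, ht0]
          simp only [pow_zero, one_mul, mul_zero, Real.exp_zero]
          linarith
        | succ m =>
          have h1 := hjump m
          have h2 := IH m (Nat.lt_succ_self m) (t (m + 1))
            ⟨htmono (Nat.le_succ m), le_refl _⟩
          calc v (m + 1) (t (m + 1)) ≤ mu * v m (t (m + 1)) := h1
            _ < mu * (mu ^ m * Real.exp ((lam + δ) * t (m + 1)) * (M + δ)) :=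
                mul_lt_mul_of_pos_left h2 hmu0
            _ = mu ^ (m + 1) * Real.exp ((lam + δ) * t (m + 1)) * (M + δ) := by ring
      set B : ℝ → ℝ := fun s => mu ^ j * Real.exp ((lam + δ) * s) * (M + δ) with hBdef
      have hBpos : ∀ s, 0 < B s := fun s =>
        mul_pos (mul_pos (pow_pos hmu0 j) (Real.exp_pos _)) (by linarith)
      have hBcont : Continuous B := by
        exact (continuous_const.mul
          (Real.continuous_exp.comp (continuous_const.mul continuous_id))).mul continuous_const
      -- continuous induction on the interval, by contradiction
      by_contra hcon
      push_neg at hcon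
      obtain ⟨s₀, hs₀, hges₀⟩ := hcon
      set A := {s | s ∈ Set.Icc (t j) (t (j + 1)) ∧ B s ≤ v j s} with hAdef
      have hAne : A.Nonempty := ⟨s₀, hs₀, hges₀⟩
      have hAclosed : IsClosed A := by
        have hf : ContinuousOn (fun s => v j s - B s) (Set.Icc (t j) (t (j + 1))) :=
          (hvcont j).sub hBcont.continuousOn
        have hA : A = Set.Icc (t j) (t (j + 1)) ∩
            (fun s => v j s - B s) ⁻¹' Set.Ici 0 := by
          ext x
          simp only [hAdef, Set.mem_setOf_eq, Set.mem_inter_iff, Set.mem_preimage,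
            Set.mem_Ici, sub_nonneg]
        rw [hA]
        exact hf.preimage_isClosed_of_isClosed isClosed_Icc isClosed_Ici
      have hAbdd : BddBelow A := ⟨t j, fun x hx => hx.1.1⟩
      set τ := sInf A with hτdef
      have hτA : τ ∈ A := hAclosed.csInf_mem hAne hAbdd
      have hτIcc : τ ∈ Set.Icc (t j) (t (j + 1)) := hτA.1
      have hτge : B τ ≤ v j τ := hτA.2
      have hτgt : t j < τ := by
        rcases lt_or_eq_of_le hτIcc.1 with h | h
        · exact h
        · exact absurd (h ▸ hτge) (not_le.2 hinit)
      have hlt : ∀ σ ∈ Set.Ico (t j) τ, v j σ < B σ := by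
        intro σ hσ
        by_contra h
        push_neg at h
        have hmem : σ ∈ A := ⟨⟨hσ.1, le_trans hσ.2.le hτIcc.2⟩, h⟩
        exact absurd (csInf_le hAbdd hmem) (not_le.2 hσ.2)
      -- derivative positivity of B - v j on (t j, τ)
      have hderivpos : ∀ x ∈ interior (Set.Icc (t j) τ),
          0 < deriv (fun s => B s - v j s) x := by
        rw [interior_Icc]
        intro x hx
        have hxI : x ∈ Set.Ioo (t j) (t (j + 1)) := ⟨hx.1, lt_of_lt_of_le hx.2 hτIcc.2⟩
        have hx0 : 0 ≤ x := le_trans (htnn j) hx.1.le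
        have hBder : HasDerivAt B ((lam + δ) * B x) x := by
          have h1 : HasDerivAt (fun s : ℝ => (lam + δ) * s) (lam + δ) x := by
            simpa using (hasDerivAt_id x).const_mul (lam + δ)
          have h2 := (h1.exp.const_mul (mu ^ j)).mul_const (M + δ)
          refine h2.congr_deriv ?_
          show _ = (lam + δ) * (mu ^ j * Real.exp ((lam + δ) * x) * (M + δ))
          ring
        have hvd : DifferentiableAt ℝ (v j) x := hvdiff j x hxI
        have hDeq : deriv (fun s => B s - v j s) x = (lam + δ) * B x - deriv (v j) x := by
          rw [deriv_fun_sub hBder.differentiableAt hvd, hBder.deriv]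
        rw [hDeq]
        -- bound the delayed supremum
        have hsupel : ∀ y ∈ w '' Set.Icc (x - r) x,
            y ≤ mu ^ j * (mu ^ K)⁻¹ * (Real.exp ((lam + δ) * x) * (M + δ)) := by
          rintro y ⟨σ, hσ, rfl⟩
          rcases lt_or_ge σ 0 with hσ0 | hσ0
          · -- history case: σ < 0
            have hwM : w σ ≤ M := le_csSup hMbdd ⟨σ, ⟨by linarith [hσ.1], hσ0.le⟩, rfl⟩
            have hxr : x - r < 0 := lt_of_le_of_lt hσ.1 hσ0
            have hjK : j ≤ K := by
              have hsub : (↑(Finset.Icc 1 j) : Set ℕ) ⊆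
                  {i : ℕ | 1 ≤ i ∧ t i ∈ Set.Ioc (x - r) x} := by
                intro i hi
                simp only [Finset.coe_Icc, Set.mem_Icc] at hi
                exact ⟨hi.1, ⟨lt_of_lt_of_le hxr (htnn i),
                  le_trans (htmono hi.2) hx.1.le⟩⟩
              have hcard := le_trans (Set.encard_mono hsub) (hK x hx0)
              rw [Set.encard_coe_eq_coe_finsetCard, Nat.card_Icc,
                Nat.add_sub_cancel] at hcard
              exact_mod_cast hcard
            have hmono1 : (1 : ℝ) ≤ mu ^ j * (mu ^ K)⁻¹ := by
              rw [← div_eq_mul_inv, le_div_iff₀ (pow_pos hmu0 K), one_mul]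
              exact pow_le_pow_of_le_one hmu0.le hmu1.le hjK
            have hexp1 : (1 : ℝ) ≤ Real.exp ((lam + δ) * x) :=
              Real.one_le_exp (mul_nonneg hld.le hx0)
            have hMd : (0:ℝ) < M + δ := by linarith
            calc w σ ≤ M := hwM
              _ ≤ M + δ := by linarith
              _ = 1 * (M + δ) := (one_mul _).symm
              _ ≤ (mu ^ j * (mu ^ K)⁻¹ * Real.exp ((lam + δ) * x)) * (M + δ) := by
                  apply mul_le_mul_of_nonneg_right _ hMd.le
                  calc (1:ℝ) = 1 * 1 := (one_mul 1).symm
                    _ ≤ (mu ^ j * (mu ^ K)⁻¹) * Real.exp ((lam + δ) * x) :=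
                        mul_le_mul hmono1 hexp1 zero_le_one (by linarith)
              _ = mu ^ j * (mu ^ K)⁻¹ * (Real.exp ((lam + δ) * x) * (M + δ)) := by ring
          · -- flow case: σ ≥ 0
            set k := Nat.findGreatest (fun i => t i ≤ σ) j with hkdef
            have hkle : k ≤ j := Nat.findGreatest_le j
            have hkt : t k ≤ σ :=
              Nat.findGreatest_spec (P := fun i => t i ≤ σ) (Nat.zero_le j) (ht0.le.trans hσ0)
            have hσlt : σ < t (k + 1) := by
              rcases lt_or_eq_of_le hkle with hkj | hkj
              · by_contra h
                push_neg at h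
                exact Nat.findGreatest_is_greatest (Nat.lt_succ_self k) hkj h
              · rw [hkj]
                exact lt_of_le_of_lt hσ.2 hxI.2
            have hwσ : w σ = v k σ := hwagree k σ ⟨hkt, hσlt⟩
            have hσx : σ < τ := lt_of_le_of_lt hσ.2 hx.2
            have hvkb : v k σ ≤ mu ^ k * Real.exp ((lam + δ) * σ) * (M + δ) := by
              rcases lt_or_eq_of_le hkle with hkj | hkj
              · exact (IH k hkj σ ⟨hkt, hσlt.le⟩).le
              · rw [hkj]
                rw [hkj] at hkt
                exact (hlt σ ⟨hkt, hσx⟩).le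
            have hjkK : j ≤ k + K := by
              rcases lt_or_eq_of_le hkle with hkj | hkj
              · have hsub : (↑(Finset.Icc (k + 1) j) : Set ℕ) ⊆
                    {i : ℕ | 1 ≤ i ∧ t i ∈ Set.Ioc (x - r) x} := by
                  intro i hi
                  simp only [Finset.coe_Icc, Set.mem_Icc] at hi
                  refine ⟨le_trans (Nat.succ_le_succ (Nat.zero_le k)) hi.1, ?_, ?_⟩
                  · calc x - r ≤ σ := hσ.1
                      _ < t (k + 1) := hσlt
                      _ ≤ t i := htmono hi.1
                  · exact le_trans (htmono hi.2) hx.1.le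
                have hcard := le_trans (Set.encard_mono hsub) (hK x hx0)
                rw [Set.encard_coe_eq_coe_finsetCard, Nat.card_Icc] at hcard
                have : j + 1 - (k + 1) ≤ K := by exact_mod_cast hcard
                omega
              · omega
            have hk2 : mu ^ k ≤ mu ^ j * (mu ^ K)⁻¹ := by
              rw [← div_eq_mul_inv, le_div_iff₀ (pow_pos hmu0 K), ← pow_add]
              exact pow_le_pow_of_le_one hmu0.le hmu1.le hjkK
            have hexp2 : Real.exp ((lam + δ) * σ) ≤ Real.exp ((lam + δ) * x) :=
              Real.exp_le_exp.2 (mul_le_mul_of_nonneg_left hσ.2 hld.le)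
            calc w σ = v k σ := hwσ
              _ ≤ mu ^ k * Real.exp ((lam + δ) * σ) * (M + δ) := hvkb
              _ ≤ (mu ^ j * (mu ^ K)⁻¹ * Real.exp ((lam + δ) * x)) * (M + δ) := by
                  apply mul_le_mul_of_nonneg_right _ (by linarith : (0:ℝ) ≤ M + δ)
                  exact mul_le_mul hk2 hexp2 (Real.exp_pos _).le
                    (mul_nonneg (pow_nonneg hmu0.le j)
                      (inv_nonneg.2 (pow_nonneg hmu0.le K)))
              _ = mu ^ j * (mu ^ K)⁻¹ * (Real.exp ((lam + δ) * x) * (M + δ)) := by ring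
        have hsup : sSup (w '' Set.Icc (x - r) x) ≤
            mu ^ j * (mu ^ K)⁻¹ * (Real.exp ((lam + δ) * x) * (M + δ)) := by
          apply Real.sSup_le hsupel
          have : (0:ℝ) < M + δ := by linarith
          positivity
        have hfl := hflow j x hxI
        have hvx : v j x ≤ B x := (hlt x ⟨hx.1.le, hx.2⟩).le
        have h1 : lam1 * v j x ≤ lam1 * B x := mul_le_mul_of_nonneg_left hvx hlam1
        have h2 : lam2 * sSup (w '' Set.Icc (x - r) x) ≤
            lam2 * (mu ^ j * (mu ^ K)⁻¹ * (Real.exp ((lam + δ) * x) * (M + δ))) :=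
          mul_le_mul_of_nonneg_left hsup hlam2
        have h3 : (lam1 + lam2 * (mu ^ K)⁻¹) * B x ≤ lam * B x :=
          mul_le_mul_of_nonneg_right hlam (hBpos x).le
        have h4 : lam * B x < (lam + δ) * B x :=
          mul_lt_mul_of_pos_right (by linarith) (hBpos x)
        have h5 : lam1 * B x + lam2 * (mu ^ j * (mu ^ K)⁻¹ *
            (Real.exp ((lam + δ) * x) * (M + δ))) = (lam1 + lam2 * (mu ^ K)⁻¹) * B x := by
          simp only [hBdef]
          ring
        linarith
      -- strict monotonicity gives the contradiction
      have hcontφ : ContinuousOn (fun s => B s - v j s) (Set.Icc (t j) τ) :=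
        hBcont.continuousOn.sub ((hvcont j).mono (Set.Icc_subset_Icc le_rfl hτIcc.2))
      have hmonoφ := strictMonoOn_of_deriv_pos (convex_Icc (t j) τ) hcontφ hderivpos
      have hval : B (t j) - v j (t j) < B τ - v j τ :=
        hmonoφ (Set.left_mem_Icc.2 hτgt.le) (Set.right_mem_Icc.2 hτgt.le) hτgt
      have hBt : B (t j) = mu ^ j * Real.exp ((lam + δ) * t j) * (M + δ) := rfl
      linarith
  -- pass to the limit δ → 0⁺
  intro j s hs
  have hc : Continuous fun δ : ℝ => mu ^ j * Real.exp ((lam + δ) * s) * (M + δ) := by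
    have h1 : Continuous fun δ : ℝ => (lam + δ) * s :=
      (continuous_const.add continuous_id).mul continuous_const
    exact (continuous_const.mul (Real.continuous_exp.comp h1)).mul
      (continuous_const.add continuous_id)
  have htend : Filter.Tendsto (fun δ : ℝ => mu ^ j * Real.exp ((lam + δ) * s) * (M + δ))
      (nhdsWithin 0 (Set.Ioi 0)) (nhds (mu ^ j * Real.exp (lam * s) * M)) := by
    have h2 := (hc.tendsto 0).mono_left (nhdsWithin_le_nhds (s := Set.Ioi (0:ℝ)))
    simpa using h2
  refine ge_of_tendsto htend ?_
  filter_upwards [self_mem_nhdsWithin] with δ hδ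
  exact (key δ hδ j s hs).le
end

section
/- Exponential decay under hybrid Halanay conditions and average dwell time: under the hybrid-arc setup and the memory setup, assume λ₁ > λ₂ ≥ 0, μ ≥ 1, let λ̄ > 0 be the unique positive root of λ̄ − λ₁ + λ₂·e^{λ̄ r} = 0, fix λ ∈ (0, λ̄), and suppose that v_j′(t) ≤ −λ₁·v_j(t) + λ₂·sup_{σ∈[t−r,t]} w(σ) for all j ∈ ℕ and all t ∈ (t_j, t_{j+1}), and v_{j+1}(t_{j+1}) ≤ μ·v_j(t_{j+1}) for all j ∈ ℕ. Assume further that there are ε > 0 and N₀ ∈ ℕ with ε·λ − ln μ > 0 and j ≤ ε⁻¹·t + N₀ for all j ∈ ℕ and t ∈ [t_j, t_{j+1}], and set θ := λ − ε⁻¹·ln μ > 0. Then for every j ∈ ℕ and every t ∈ [t_j, t_{j+1}], v_j(t) ≤ μ^{N₀}·e^{θεN₀/2}·e^{−(θ/2)(t + εj)}·sup_{σ∈[−r,0]} w(σ). -/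
set_option maxHeartbeats 1000000


/-- Part 3 of the proof of Theorem 6: combining the hybrid Halanay estimate with the
average dwell-time condition `ελ - ln μ > 0`, `j ≤ ε⁻¹ t + N₀`, and `θ = λ - ε⁻¹ ln μ`
yields the decay bound
`v j t ≤ μ^{N₀} e^{θεN₀/2} e^{-(θ/2)(t + εj)} sup_{σ ∈ [-r,0]} w(σ)`. -/
theorem hybrid_halanay_dwell_time_decay
    -- hybrid-arc setup
    (t : ℕ → ℝ) (ht0 : t 0 = 0) (htmono : Monotone t)
    (v : ℕ → ℝ → ℝ)
    (hvnn : ∀ j : ℕ, ∀ s ∈ Set.Icc (t j) (t (j + 1)), 0 ≤ v j s)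
    (hvcont : ∀ j : ℕ, ContinuousOn (v j) (Set.Icc (t j) (t (j + 1))))
    (hvdiff : ∀ j : ℕ, ∀ s ∈ Set.Ioo (t j) (t (j + 1)), DifferentiableAt ℝ (v j) s)
    -- memory setup
    (r : ℝ) (hr : 0 < r)
    (w : ℝ → ℝ)
    (hwnn : ∀ s ∈ Set.Icc (-r) (0 : ℝ), 0 ≤ w s)
    (hwcont : ContinuousOn w (Set.Icc (-r) 0))
    (hw0 : w 0 = v 0 0)
    (hwagree : ∀ j : ℕ, ∀ s ∈ Set.Ico (t j) (t (j + 1)), w s = v j s)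
    -- Halanay data
    (lam1 lam2 mu : ℝ) (hlam : lam1 > lam2) (hlam2 : 0 ≤ lam2) (hmu : 1 ≤ mu)
    (lamBar : ℝ) (hlamBar : 0 < lamBar)
    (hroot : lamBar - lam1 + lam2 * Real.exp (lamBar * r) = 0)
    (lam : ℝ) (hlam0 : 0 < lam) (hlamlt : lam < lamBar)
    (hflow : ∀ j : ℕ, ∀ s ∈ Set.Ioo (t j) (t (j + 1)),
      deriv (v j) s ≤ -lam1 * v j s + lam2 * sSup (w '' Set.Icc (s - r) s))
    (hjump : ∀ j : ℕ, v (j + 1) (t (j + 1)) ≤ mu * v j (t (j + 1)))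
    -- average dwell-time condition
    (eps : ℝ) (N0 : ℕ) (heps : 0 < eps)
    (hadt : eps * lam - Real.log mu > 0)
    (hdwell : ∀ j : ℕ, ∀ s ∈ Set.Icc (t j) (t (j + 1)), (j : ℝ) ≤ eps⁻¹ * s + N0)
    (θ : ℝ) (hθ : θ = lam - eps⁻¹ * Real.log mu) :
    ∀ j : ℕ, ∀ s ∈ Set.Icc (t j) (t (j + 1)),
      v j s ≤ mu ^ N0 * Real.exp (θ * eps * N0 / 2) *
        Real.exp (-(θ / 2) * (s + eps * j)) * sSup (w '' Set.Icc (-r) 0) := by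
  have hmupos : (0:ℝ) < mu := lt_of_lt_of_le one_pos hmu
  set M := sSup (w '' Set.Icc (-r) 0) with hM
  have hbdd : BddAbove (w '' Set.Icc (-r) 0) :=
    isCompact_Icc.bddAbove_image hwcont
  have hwM : ∀ σ ∈ Set.Icc (-r) (0:ℝ), w σ ≤ M :=
    fun σ hσ => le_csSup hbdd ⟨σ, hσ, rfl⟩
  have hM0 : 0 ≤ M :=
    le_trans (hwnn 0 ⟨by linarith, le_refl 0⟩) (hwM 0 ⟨by linarith, le_refl 0⟩)
  have htnn : ∀ j : ℕ, 0 ≤ t j := fun j => ht0 ▸ htmono (Nat.zero_le j)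
  -- the characteristic function is negative at lam
  have hglam : lam - lam1 + lam2 * Real.exp (lam * r) < 0 := by
    have hmono : StrictMono (fun x : ℝ => x + lam2 * Real.exp (x * r)) := by
      apply strictMono_id.add_monotone
      intro a b hab
      have : Real.exp (a * r) ≤ Real.exp (b * r) :=
        Real.exp_le_exp.2 (mul_le_mul_of_nonneg_right hab hr.le)
      exact mul_le_mul_of_nonneg_left this hlam2
    have h := hmono hlamlt
    simp only [id] at h
    linarith
  -- the key hybrid Halanay estimate (21)
  have key : ∀ j : ℕ, ∀ s ∈ Set.Icc (t j) (t (j+1)),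
      v j s ≤ mu ^ j * Real.exp (-(lam * s)) * M := by
    intro j
    induction j using Nat.strong_induction_on with
    | _ j IH =>
      have hbase : v j (t j) ≤ mu ^ j * Real.exp (-(lam * t j)) * M := by
        cases j with
        | zero =>
          rw [ht0]
          simpa [← hw0] using hwM 0 ⟨by linarith, le_refl 0⟩
        | succ k =>
          have h1 := hjump k
          have h2 := IH k (Nat.lt_succ_self k) (t (k+1)) ⟨htmono (Nat.le_succ k), le_refl _⟩
          calc v (k+1) (t (k+1)) ≤ mu * v k (t (k+1)) := h1
            _ ≤ mu * (mu ^ k * Real.exp (-(lam * t (k+1))) * M) :=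
                mul_le_mul_of_nonneg_left h2 hmupos.le
            _ = mu ^ (k+1) * Real.exp (-(lam * t (k+1))) * M := by ring
      have hdelta : ∀ δ : ℝ, 0 < δ → ∀ s ∈ Set.Icc (t j) (t (j+1)),
          v j s ≤ mu ^ j * Real.exp (-(lam * s)) * (M + δ) := by
        intro δ hδ
        by_contra hcon
        push_neg at hcon
        obtain ⟨σ0, hσ0, hbad⟩ := hcon
        set K := mu ^ j * (M + δ) with hKdef
        have hKpos : 0 < K := mul_pos (pow_pos hmupos j) (by linarith)
        set G : ℝ → ℝ := fun x => v j x - K * Real.exp (-(lam * x)) with hGdef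
        have hGcont : ContinuousOn G (Set.Icc (t j) (t (j+1))) := by
          apply (hvcont j).sub
          exact (continuous_const.mul (Real.continuous_exp.comp
            (continuous_const.mul continuous_id).neg)).continuousOn
        have hGtj : G (t j) < 0 := by
          have h2 : 0 < Real.exp (-(lam * t j)) := Real.exp_pos _
          have h3 : 0 < mu ^ j := pow_pos hmupos j
          have : K * Real.exp (-(lam * t j)) = mu ^ j * Real.exp (-(lam * t j)) * (M + δ) := by
            rw [hKdef]; ring
          simp only [hGdef]
          nlinarith [hbase, mul_pos (mul_pos h3 h2) hδ]
        have hGσ0 : 0 < G σ0 := by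
          have : K * Real.exp (-(lam * σ0)) = mu ^ j * Real.exp (-(lam * σ0)) * (M + δ) := by
            rw [hKdef]; ring
          simp only [hGdef]
          nlinarith [hbad]
        -- the first crossing time c
        set B := Set.Icc (t j) σ0 ∩ G ⁻¹' Set.Ici 0 with hBdef
        have hBne : B.Nonempty := ⟨σ0, ⟨hσ0.1, le_refl _⟩, hGσ0.le⟩
        have hBbdd : BddBelow B := ⟨t j, fun x hx => hx.1.1⟩
        have hBclosed : IsClosed B :=
          (hGcont.mono (Set.Icc_subset_Icc_right hσ0.2)).preimage_isClosed_of_isClosed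
            isClosed_Icc isClosed_Ici
        set c := sInf B with hcdef
        have hcmem : c ∈ B := hBclosed.csInf_mem hBne hBbdd
        have hGc0 : (0:ℝ) ≤ G c := hcmem.2
        have hlt : ∀ σ ∈ Set.Ico (t j) c, G σ < 0 := by
          intro σ hσ
          by_contra h
          push_neg at h
          have hσB : σ ∈ B := ⟨⟨hσ.1, le_trans hσ.2.le hcmem.1.2⟩, h⟩
          exact absurd (csInf_le hBbdd hσB) (not_le.2 hσ.2)
        have htjc : t j < c := by
          rcases eq_or_lt_of_le hcmem.1.1 with h | h
          · exfalso; rw [← h] at hGc0; linarith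
          · exact h
        have hGcle : G c ≤ 0 := by
          have hcw : ContinuousWithinAt G (Set.Icc (t j) (t (j+1))) c :=
            hGcont c ⟨hcmem.1.1, le_trans hcmem.1.2 hσ0.2⟩
          have hmem2 : Set.Icc (t j) (t (j+1)) ∈ nhdsWithin c (Set.Iio c) := by
            apply Filter.mem_of_superset (Ioo_mem_nhdsLT_of_mem ⟨htjc, le_refl c⟩)
            intro x hx
            exact ⟨hx.1.le, le_trans hx.2.le (le_trans hcmem.1.2 hσ0.2)⟩
          have htend : Filter.Tendsto G (nhdsWithin c (Set.Iio c)) (nhds (G c)) :=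
            hcw.tendsto.mono_left (nhdsWithin_le_of_mem hmem2)
          refine le_of_tendsto htend ?_
          filter_upwards [Ioo_mem_nhdsLT_of_mem ⟨htjc, le_refl c⟩] with x hx
          exact (hlt x ⟨hx.1.le, hx.2⟩).le
        have hGceq : G c = 0 := le_antisymm hGcle hGc0
        have hcσ0 : c < σ0 := by
          rcases eq_or_lt_of_le hcmem.1.2 with h | h
          · exfalso; rw [h] at hGceq; linarith
          · exact h
        have hclt : c < t (j+1) := lt_of_lt_of_le hcσ0 hσ0.2
        have hGle : ∀ σ ∈ Set.Icc (t j) c, G σ ≤ 0 := by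
          intro σ hσ
          rcases eq_or_lt_of_le hσ.2 with h | h
          · rw [h, hGceq]
          · exact (hlt σ ⟨hσ.1, h⟩).le
        -- derivative information at c
        have hdiffv : DifferentiableAt ℝ (v j) c := hvdiff j c ⟨htjc, hclt⟩
        have hEder : HasDerivAt (fun x : ℝ => K * Real.exp (-(lam * x)))
            (K * (Real.exp (-(lam * c)) * (-lam))) c := by
          have h1 : HasDerivAt (fun x : ℝ => -(lam * x)) (-lam) c := by
            have h0 := ((hasDerivAt_id' c).const_mul lam).neg; rw [mul_one] at h0; exact h0
          exact HasDerivAt.const_mul K h1.exp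
        have hGderiv : HasDerivAt G (deriv (v j) c - K * (Real.exp (-(lam * c)) * (-lam))) c :=
          (hdiffv.hasDerivAt).sub hEder
        have hderiv0 : 0 ≤ deriv (v j) c - K * (Real.exp (-(lam * c)) * (-lam)) := by
          have hslope := hasDerivAt_iff_tendsto_slope.mp hGderiv
          have hle : nhdsWithin c (Set.Iio c) ≤ nhdsWithin c {c}ᶜ :=
            nhdsWithin_mono _ (fun x hx => ne_of_lt hx)
          refine ge_of_tendsto (hslope.mono_left hle) ?_
          filter_upwards [Ioo_mem_nhdsLT_of_mem ⟨htjc, le_refl c⟩] with x hx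
          have hGx : G x ≤ 0 := (hlt x ⟨hx.1.le, hx.2⟩).le
          rw [slope_def_field, hGceq, sub_zero]
          rw [div_nonneg_iff]
          right
          exact ⟨hGx, by linarith [hx.2]⟩
        have hvc : v j c = K * Real.exp (-(lam * c)) := by
          have h := hGceq
          simp only [hGdef] at h
          linarith
        -- bounding the memory term
        have hwb : ∀ σ ∈ Set.Icc (c - r) c, w σ ≤ K * Real.exp (-(lam * σ)) := by
          intro σ hσ
          have hσr : -r ≤ σ := by have := htnn j; linarith [hσ.1]
          have hEσ : 0 < Real.exp (-(lam * σ)) := Real.exp_pos _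
          rcases le_or_gt σ 0 with hσ0' | hσpos
          · have h1 : w σ ≤ M := hwM σ ⟨hσr, hσ0'⟩
            have h2 : (1:ℝ) ≤ Real.exp (-(lam * σ)) := by
              apply Real.one_le_exp; nlinarith
            have h3 : (1:ℝ) ≤ mu ^ j := one_le_pow₀ hmu
            have h4 : M + δ ≤ K := by
              rw [hKdef]; nlinarith
            nlinarith
          · rcases le_or_gt (t j) σ with hcase | hcase
            · have hweq : w σ = v j σ := hwagree j σ ⟨hcase, lt_of_le_of_lt hσ.2 hclt⟩
              have h := hGle σ ⟨hcase, hσ.2⟩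
              simp only [hGdef] at h
              linarith [hweq ▸ h]
            · -- σ lies in an earlier flow interval
              have hex : ∃ k, k < j ∧ t k ≤ σ ∧ σ < t (k + 1) := by
                classical
                set P : ℕ → Prop := fun i => t i ≤ σ with hPdef
                have hP0 : P 0 := by simp only [hPdef]; rw [ht0]; exact hσpos.le
                have hk1 : P (Nat.findGreatest P j) := Nat.findGreatest_spec (Nat.zero_le j) hP0
                have hkj : Nat.findGreatest P j < j := by
                  rcases lt_or_ge (Nat.findGreatest P j) j with h | h
                  · exact h
                  · exfalso
                    have hkeq : Nat.findGreatest P j = j :=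
                      le_antisymm (Nat.findGreatest_le j) h
                    rw [hkeq] at hk1
                    simp only [hPdef] at hk1
                    linarith
                have hk2 : σ < t (Nat.findGreatest P j + 1) := by
                  by_contra h
                  push_neg at h
                  exact Nat.findGreatest_is_greatest (Nat.lt_succ_self _) hkj
                    (by simp only [hPdef]; exact h)
                exact ⟨Nat.findGreatest P j, hkj, by simpa [hPdef] using hk1, hk2⟩
              obtain ⟨k, hkj, hk1, hk2⟩ := hex
              have hweq : w σ = v k σ := hwagree k σ ⟨hk1, hk2⟩
              have hIH := IH k hkj σ ⟨hk1, hk2.le⟩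
              have hpow : mu ^ k ≤ mu ^ j := pow_le_pow_right₀ hmu hkj.le
              rw [hweq]
              have hpk : 0 < mu ^ k := pow_pos hmupos k
              calc v k σ ≤ mu ^ k * Real.exp (-(lam * σ)) * M := hIH
                _ ≤ mu ^ j * Real.exp (-(lam * σ)) * (M + δ) := by
                    nlinarith [mul_nonneg (mul_nonneg (sub_nonneg.2 hpow) hEσ.le) hM0,
                      mul_pos (mul_pos (pow_pos hmupos j) hEσ) hδ]
                _ = K * Real.exp (-(lam * σ)) := by rw [hKdef]; ring
        have hsup : sSup (w '' Set.Icc (c - r) c) ≤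
            K * Real.exp (lam * r) * Real.exp (-(lam * c)) := by
          apply Real.sSup_le
          · rintro x ⟨σ, hσ, rfl⟩
            calc w σ ≤ K * Real.exp (-(lam * σ)) := hwb σ hσ
              _ ≤ K * Real.exp (lam * r) * Real.exp (-(lam * c)) := by
                  have hexp : Real.exp (-(lam * σ)) ≤
                      Real.exp (lam * r) * Real.exp (-(lam * c)) := by
                    rw [← Real.exp_add]
                    apply Real.exp_le_exp.2
                    nlinarith [hσ.1]
                  calc K * Real.exp (-(lam * σ))
                      ≤ K * (Real.exp (lam * r) * Real.exp (-(lam * c))) :=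
                        mul_le_mul_of_nonneg_left hexp hKpos.le
                    _ = K * Real.exp (lam * r) * Real.exp (-(lam * c)) := by ring
          · positivity
        have hf := hflow j c ⟨htjc, hclt⟩
        rw [hvc] at hf
        have hEpos : 0 < Real.exp (-(lam * c)) := Real.exp_pos _
        have h2 : lam2 * sSup (w '' Set.Icc (c - r) c) ≤
            lam2 * (K * Real.exp (lam * r) * Real.exp (-(lam * c))) :=
          mul_le_mul_of_nonneg_left hsup hlam2
        nlinarith [mul_pos hKpos hEpos,
          mul_neg_of_neg_of_pos hglam (mul_pos hKpos hEpos)]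
      intro s hs
      have hXpos : 0 < mu ^ j * Real.exp (-(lam * s)) := by positivity
      refine le_of_forall_pos_le_add ?_
      intro ε hε
      have h := hdelta (ε / (mu ^ j * Real.exp (-(lam * s)))) (by positivity) s hs
      have heq : mu ^ j * Real.exp (-(lam * s)) * (ε / (mu ^ j * Real.exp (-(lam * s)))) = ε := by
        field_simp
      nlinarith [h, heq]
  -- combine with the dwell-time condition
  intro j s hs
  have hkey := key j s hs
  have hlogmu : 0 ≤ Real.log mu := Real.log_nonneg hmu
  have hθpos : 0 < θ := by
    rw [hθ]
    have h1 : 0 < eps⁻¹ * (eps * lam - Real.log mu) := mul_pos (inv_pos.2 heps) hadt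
    have h2 : eps⁻¹ * eps = 1 := inv_mul_cancel₀ heps.ne'
    nlinarith
  have hlog : Real.log mu = eps * (lam - θ) := by
    rw [hθ]; field_simp; ring
  have hs0 : 0 ≤ s := le_trans (htnn j) hs.1
  have hj2 : eps * j ≤ s + eps * N0 := by
    have h1 := hdwell j s hs
    have h2 := mul_le_mul_of_nonneg_left h1 heps.le
    have h3 : eps * (eps⁻¹ * s) = s := by field_simp
    nlinarith
  have hθle : θ ≤ lam := by
    rw [hθ]
    have h := mul_nonneg (inv_pos.2 heps).le hlogmu
    linarith
  have hmain : mu ^ j * Real.exp (-(lam * s)) ≤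
      mu ^ N0 * Real.exp (θ * eps * N0 / 2) * Real.exp (-(θ / 2) * (s + eps * j)) := by
    have hpj : mu ^ j = Real.exp (j * Real.log mu) := by
      rw [Real.exp_nat_mul, Real.exp_log hmupos]
    have hpN : mu ^ N0 = Real.exp (N0 * Real.log mu) := by
      rw [Real.exp_nat_mul, Real.exp_log hmupos]
    rw [hpj, hpN, ← Real.exp_add, ← Real.exp_add, ← Real.exp_add]
    apply Real.exp_le_exp.2
    rw [hlog]
    nlinarith [mul_nonneg (sub_nonneg.2 hj2) (by linarith : (0:ℝ) ≤ lam - θ/2)]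
  calc v j s ≤ mu ^ j * Real.exp (-(lam * s)) * M := hkey
    _ ≤ mu ^ N0 * Real.exp (θ * eps * N0 / 2) * Real.exp (-(θ / 2) * (s + eps * j)) * M :=
        mul_le_mul_of_nonneg_right hmain hM0
end

section
/- Razumikhin attractivity for delay differential inequalities: let r > 0, let α : [0,∞) → [0,∞) be positive definite, let γ : [0,∞) → [0,∞) be continuous and nondecreasing with γ(s) < s for all s > 0, and let v : [−r, ∞) → [0,∞) be continuous on [−r,∞) and differentiable on (0,∞) such that for every t > 0, v(t) ≥ γ( sup_{s∈[t−r,t]} v(s) ) implies v′(t) ≤ −α(v(t)). Then v(t) ≤ sup_{s∈[−r,0]} v(s) for all t ≥ 0, and v(t) → 0 as t → ∞. -/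
open Set Filter


private lemma razumikhin_barrier (r : ℝ) (hr : 0 < r)
    (α : ℝ → ℝ) (hαpos : ∀ s : ℝ, 0 < s → 0 < α s)
    (γ : ℝ → ℝ) (hγmono : MonotoneOn γ (Set.Ici 0))
    (v : ℝ → ℝ)
    (hvcont : ContinuousOn v (Set.Ici (-r)))
    (hvdiff : ∀ t : ℝ, 0 < t → DifferentiableAt ℝ v t)
    (hraz : ∀ t : ℝ, 0 < t →
      v t ≥ γ (sSup (v '' Set.Icc (t - r) t)) → deriv v t ≤ -α (v t))
    (T b c : ℝ) (hT : 0 ≤ T) (hb : 0 < b) (hbc : b ≤ c) (hγc : γ c < b)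
    (hglob : ∀ s, T - r ≤ s → s ≤ T → v s ≤ c)
    (hvT : v T < b) :
    ∀ t, T ≤ t → v t < b := by
  by_contra h
  push_neg at h
  obtain ⟨t₁, ht₁T, ht₁⟩ := h
  set S : Set ℝ := {t | T ≤ t ∧ b ≤ v t} with hS
  have hSne : S.Nonempty := ⟨t₁, ht₁T, ht₁⟩
  have hSbdd : BddBelow S := ⟨T, fun x hx => hx.1⟩
  have hScl : IsClosed S := by
    have h1 : S = Set.Ici T ∩ v ⁻¹' Set.Ici b := by
      ext x; simp [hS, Set.mem_Ici]
    rw [h1]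
    exact (hvcont.mono (fun x hx => by simp only [mem_Ici] at *; linarith)).preimage_isClosed_of_isClosed
      isClosed_Ici isClosed_Ici
  set τ := sInf S with hτdef
  obtain ⟨hτT, hτb⟩ : T ≤ τ ∧ b ≤ v τ := hScl.csInf_mem hSne hSbdd
  have hτne : T ≠ τ := fun h => by rw [← h] at hτb; linarith
  have hTτ : T < τ := lt_of_le_of_ne hτT hτne
  have hτpos : 0 < τ := lt_of_le_of_lt hT hTτ
  have hbefore : ∀ t, T ≤ t → t < τ → v t < b := by
    intro t htT htτ
    by_contra hc'
    push_neg at hc'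
    exact absurd (csInf_le hSbdd ⟨htT, hc'⟩) (not_le.mpr htτ)
  -- v τ = b by left-continuity
  have hcontτ : ContinuousAt v τ :=
    hvcont.continuousAt (Ici_mem_nhds (by linarith))
  have hvτ : v τ = b := by
    refine le_antisymm ?_ hτb
    have htend : Tendsto v (nhdsWithin τ (Iio τ)) (nhds (v τ)) :=
      hcontτ.continuousWithinAt.tendsto
    refine le_of_tendsto htend ?_
    filter_upwards [Ioo_mem_nhdsLT_of_mem (show τ ∈ Ioc T τ from ⟨hTτ, le_refl τ⟩)] with t ht
    exact (hbefore t ht.1.le ht.2).le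
  -- the sup over the window is at most c
  have hwinne : (v '' Set.Icc (τ - r) τ).Nonempty :=
    ⟨v τ, ⟨τ, ⟨by linarith, le_refl τ⟩, rfl⟩⟩
  have hwinle : ∀ y ∈ v '' Set.Icc (τ - r) τ, y ≤ c := by
    rintro y ⟨s, ⟨hs1, hs2⟩, rfl⟩
    rcases le_or_gt s T with hsT | hsT
    · exact hglob s (by linarith) hsT
    · rcases lt_or_eq_of_le hs2 with h' | h'
      · exact le_trans (hbefore s hsT.le h').le hbc
      · rw [h', hvτ]; exact hbc
  have hsupc : sSup (v '' Set.Icc (τ - r) τ) ≤ c := csSup_le hwinne hwinle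
  have hsupb : b ≤ sSup (v '' Set.Icc (τ - r) τ) := by
    rw [← hvτ]
    exact le_csSup ⟨c, fun y hy => hwinle y hy⟩ ⟨τ, ⟨by linarith, le_refl τ⟩, rfl⟩
  have hrazτ : deriv v τ ≤ -α (v τ) := by
    apply hraz τ hτpos
    rw [hvτ, ge_iff_le]
    calc γ (sSup (v '' Set.Icc (τ - r) τ)) ≤ γ c :=
          hγmono (by simp only [mem_Ici]; linarith) (by simp only [mem_Ici]; linarith) hsupc
      _ ≤ b := hγc.le
  have hderivneg : deriv v τ < 0 := by
    have := hαpos b hb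
    rw [hvτ] at hrazτ
    linarith
  -- slope contradiction
  have hd : HasDerivAt v (deriv v τ) τ := (hvdiff τ hτpos).hasDerivAt
  have hslope := hasDerivAt_iff_tendsto_slope.mp hd
  have hslope' : Tendsto (slope v τ) (nhdsWithin τ (Iio τ)) (nhds (deriv v τ)) :=
    hslope.mono_left (nhdsWithin_mono τ (fun x hx => ne_of_lt hx))
  have hev : ∀ᶠ t in nhdsWithin τ (Iio τ), slope v τ t < 0 :=
    hslope'.eventually_lt_const hderivneg
  have hev2 : ∀ᶠ t in nhdsWithin τ (Iio τ), t ∈ Ioo T τ :=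
    Ioo_mem_nhdsLT_of_mem ⟨hTτ, le_refl τ⟩
  obtain ⟨t, hts, htI⟩ := (hev.and hev2).exists
  have hslt : (v t - v τ) / (t - τ) < 0 := by rwa [slope_def_field] at hts
  have htne : t - τ < 0 := by linarith [htI.2]
  have hvt : v τ < v t := by
    by_contra hc'
    push_neg at hc'
    have : 0 ≤ (v t - v τ) / (t - τ) := div_nonneg_of_nonpos (by linarith) htne.le
    linarith
  have := hbefore t htI.1.le htI.2
  rw [hvτ] at hvt
  linarith


private lemma razumikhin_decrease (r : ℝ) (hr : 0 < r)
    (α : ℝ → ℝ) (hαcont : ContinuousOn α (Set.Ici 0))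
    (hαpos : ∀ s : ℝ, 0 < s → 0 < α s)
    (γ : ℝ → ℝ) (hγnn : ∀ s : ℝ, 0 ≤ s → 0 ≤ γ s)
    (hγmono : MonotoneOn γ (Set.Ici 0))
    (hsg : ∀ s : ℝ, 0 < s → γ s < s)
    (v : ℝ → ℝ)
    (hvnn : ∀ t ∈ Set.Ici (-r), 0 ≤ v t)
    (hvcont : ContinuousOn v (Set.Ici (-r)))
    (hvdiff : ∀ t : ℝ, 0 < t → DifferentiableAt ℝ v t)
    (hraz : ∀ t : ℝ, 0 < t →
      v t ≥ γ (sSup (v '' Set.Icc (t - r) t)) → deriv v t ≤ -α (v t))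
    (hbarrier : ∀ (T b c : ℝ), 0 ≤ T → 0 < b → b ≤ c → γ c < b →
      (∀ s, T - r ≤ s → s ≤ T → v s ≤ c) → v T < b → ∀ t, T ≤ t → v t < b)
    (T c : ℝ) (hT : 0 ≤ T) (hc : 0 < c)
    (hbound : ∀ s, T - r ≤ s → v s ≤ c) :
    ∃ T', T ≤ T' ∧ 0 ≤ T' ∧ ∀ s, T' - r ≤ s → v s ≤ (γ c + c) / 2 := by
  set η := (γ c + c) / 2 with hηdef
  have hγc : γ c < c := hsg c hc
  have hγ0 : 0 ≤ γ c := hγnn c hc.le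
  have hη1 : γ c < η := by rw [hηdef]; linarith
  have hη2 : η < c := by rw [hηdef]; linarith
  have hηpos : 0 < η := by rw [hηdef]; linarith
  -- the minimum of α on [η, c]
  obtain ⟨x₀, hx₀K, hx₀min⟩ :=
    isCompact_Icc.exists_isMinOn (nonempty_Icc.mpr hη2.le)
      (hαcont.mono (fun x hx => le_trans hηpos.le hx.1))
  set a := α x₀ with hadef
  have ha : 0 < a := hαpos x₀ (lt_of_lt_of_le hηpos hx₀K.1)
  -- Step 1: there exists t₀ ≥ T with v t₀ < η
  have hstep1 : ∃ t₀, T ≤ t₀ ∧ v t₀ < η := by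
    by_contra h
    push_neg at h
    -- then deriv v t ≤ -a for all t > T
    have hderiv : ∀ t, T < t → deriv v t ≤ -a := by
      intro t ht
      have htpos : 0 < t := lt_of_le_of_lt hT ht
      have hvtle : v t ≤ c := hbound t (by linarith)
      have hvtge : η ≤ v t := h t ht.le
      have hsup : sSup (v '' Set.Icc (t - r) t) ≤ c := by
        apply csSup_le
        · exact ⟨v t, ⟨t, ⟨by linarith, le_refl t⟩, rfl⟩⟩
        · rintro y ⟨s, ⟨hs1, hs2⟩, rfl⟩
          exact hbound s (by linarith)
      have hsupge : η ≤ sSup (v '' Set.Icc (t - r) t) :=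
        le_trans hvtge (le_csSup ⟨c, by rintro y ⟨s, ⟨hs1, hs2⟩, rfl⟩; exact hbound s (by linarith)⟩
          ⟨t, ⟨by linarith, le_refl t⟩, rfl⟩)
      have h1 : deriv v t ≤ -α (v t) := by
        apply hraz t htpos
        calc γ (sSup (v '' Set.Icc (t - r) t)) ≤ γ c :=
              hγmono (by simp only [mem_Ici]; linarith) (by simp only [mem_Ici]; linarith) hsup
          _ ≤ η := hη1.le
          _ ≤ v t := hvtge
      have h2 : a ≤ α (v t) := hx₀min ⟨hvtge, hvtle⟩
      linarith
    -- then v decreases linearly and becomes negative: contradiction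
    set t₂ := T + 1 with ht₂def
    set t₃ := t₂ + (c / a + 1) with ht₃def
    have ht₂₃ : t₂ ≤ t₃ := by
      have : 0 ≤ c / a := div_nonneg hc.le ha.le
      rw [ht₃def]; linarith
    have hanti : AntitoneOn (fun t => v t + a * t) (Set.Icc t₂ t₃) := by
      apply antitoneOn_of_deriv_nonpos (convex_Icc t₂ t₃)
      · apply ContinuousOn.add
        · refine hvcont.mono (fun x hx => ?_)
          have h1 : t₂ ≤ x := hx.1
          rw [ht₂def] at h1
          exact Set.mem_Ici.mpr (by linarith)
        · exact (continuous_const.mul continuous_id).continuousOn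
      · rw [interior_Icc]
        intro x hx
        exact ((hvdiff x (by have := hx.1; rw [ht₂def] at this; linarith)).add
          ((differentiable_id.const_mul a) x)).differentiableWithinAt
      · rw [interior_Icc]
        intro x hx
        have hxT : T < x := by have := hx.1; rw [ht₂def] at this; linarith
        have hd : deriv (fun t => v t + a * t) x = deriv v x + a := by
          have h1 : HasDerivAt (fun t => v t + a * t) (deriv v x + a * 1) x :=
            ((hvdiff x (lt_of_le_of_lt hT hxT)).hasDerivAt).add
              ((hasDerivAt_id x).const_mul a)
          rw [h1.deriv]; ring
        rw [hd]
        have := hderiv x hxT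
        linarith
    have hmem₂ : t₂ ∈ Set.Icc t₂ t₃ := ⟨le_refl _, ht₂₃⟩
    have hmem₃ : t₃ ∈ Set.Icc t₂ t₃ := ⟨ht₂₃, le_refl _⟩
    have h4 := hanti hmem₂ hmem₃ ht₂₃
    simp only at h4
    have hvt₂ : v t₂ ≤ c := hbound t₂ (by rw [ht₂def]; linarith)
    have hvt₃ : 0 ≤ v t₃ := hvnn t₃ (by simp only [mem_Ici]; rw [ht₃def, ht₂def]
                                        have : 0 ≤ c / a := div_nonneg hc.le ha.le
                                        linarith)
    have hca : a * (c / a) = c := by field_simp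
    have : v t₃ ≤ v t₂ - a * (c / a + 1) := by rw [ht₃def] at h4 ⊢; nlinarith
    nlinarith
  obtain ⟨t₀, ht₀T, ht₀⟩ := hstep1
  have ht₀0 : 0 ≤ t₀ := le_trans hT ht₀T
  have hbar := hbarrier t₀ η c ht₀0 hηpos hη2.le hη1
    (fun s hs1 hs2 => hbound s (by linarith)) ht₀
  refine ⟨t₀ + r, by linarith, by linarith, fun s hs => ?_⟩
  exact (hbar s (by linarith)).le

/-- Razumikhin attractivity for delay differential inequalities (continuous instance of the
argument establishing the KLL bound (5) in the proof of Theorem 1): under the Razumikhin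
condition with a positive definite `α` and small-gain `γ`, one has
`v(t) ≤ sup_{s ∈ [-r,0]} v(s)` for all `t ≥ 0`, and `v(t) → 0` as `t → ∞`. -/
theorem razumikhin_attractivity (r : ℝ) (hr : 0 < r)
    (α : ℝ → ℝ) (hαcont : ContinuousOn α (Set.Ici 0)) (hα0 : α 0 = 0)
    (hαpos : ∀ s : ℝ, 0 < s → 0 < α s)
    (γ : ℝ → ℝ) (hγnn : ∀ s : ℝ, 0 ≤ s → 0 ≤ γ s)
    (hγcont : ContinuousOn γ (Set.Ici 0)) (hγmono : MonotoneOn γ (Set.Ici 0))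
    (hsg : ∀ s : ℝ, 0 < s → γ s < s)
    (v : ℝ → ℝ)
    (hvnn : ∀ t ∈ Set.Ici (-r), 0 ≤ v t)
    (hvcont : ContinuousOn v (Set.Ici (-r)))
    (hvdiff : ∀ t : ℝ, 0 < t → DifferentiableAt ℝ v t)
    (hraz : ∀ t : ℝ, 0 < t →
      v t ≥ γ (sSup (v '' Set.Icc (t - r) t)) → deriv v t ≤ -α (v t)) :
    (∀ t : ℝ, 0 ≤ t → v t ≤ sSup (v '' Set.Icc (-r) 0)) ∧
    Filter.Tendsto v Filter.atTop (nhds 0) := by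
  have hbarrier := razumikhin_barrier r hr α hαpos γ hγmono v hvcont hvdiff hraz
  have hdecrease := razumikhin_decrease r hr α hαcont hαpos γ hγnn hγmono hsg v hvnn
    hvcont hvdiff hraz hbarrier
  set M := sSup (v '' Set.Icc (-r) 0) with hMdef
  have hsub : Set.Icc (-r) 0 ⊆ Set.Ici (-r) := fun x hx => hx.1
  have hMbdd : BddAbove (v '' Set.Icc (-r) 0) :=
    (isCompact_Icc.image_of_continuousOn (hvcont.mono hsub)).bddAbove
  have hmem0 : (0 : ℝ) ∈ Set.Icc (-r) 0 := ⟨by linarith, le_refl 0⟩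
  have hv0M : v 0 ≤ M := le_csSup hMbdd ⟨0, hmem0, rfl⟩
  have hM0 : 0 ≤ M := le_trans (hvnn 0 (by simp only [mem_Ici]; linarith)) hv0M
  have hIccM : ∀ s ∈ Set.Icc (-r) 0, v s ≤ M := fun s hs => le_csSup hMbdd ⟨s, hs, rfl⟩
  -- part 1
  have part1 : ∀ t : ℝ, 0 ≤ t → v t ≤ M := by
    intro t ht
    refine le_of_forall_pos_le_add (fun ε hε => ?_)
    have hb : 0 < M + ε := by linarith
    have := hbarrier 0 (M + ε) (M + ε) le_rfl hb le_rfl (hsg _ hb)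
      (fun s hs1 hs2 => le_trans (hIccM s ⟨by linarith, hs2⟩) (by linarith))
      (by linarith) t ht
    linarith
  refine ⟨part1, ?_⟩
  -- global bound
  have hbound0 : ∀ s, (0:ℝ) - r ≤ s → v s ≤ M + 1 := by
    intro s hs
    rcases le_or_gt s 0 with h | h
    · exact le_trans (hIccM s ⟨by linarith, h⟩) (by linarith)
    · exact le_trans (part1 s h.le) (by linarith)
  -- the iteration sequence
  set c : ℕ → ℝ := fun n => Nat.rec (M + 1) (fun _ cn => (γ cn + cn) / 2) n with hcdef
  have hc0 : c 0 = M + 1 := rfl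
  have hcsucc : ∀ n, c (n + 1) = (γ (c n) + c n) / 2 := fun n => rfl
  have hcpos : ∀ n, 0 < c n := by
    intro n
    induction n with
    | zero => rw [hc0]; linarith
    | succ n ih =>
      rw [hcsucc]
      have := hγnn (c n) ih.le
      linarith
  have hclt : ∀ n, c (n + 1) < c n := by
    intro n
    rw [hcsucc]
    have := hsg (c n) (hcpos n)
    linarith
  have hcanti : Antitone c := antitone_nat_of_succ_le (fun n => (hclt n).le)
  -- the times
  have hkey : ∀ n : ℕ, ∃ T, 0 ≤ T ∧ ∀ s, T - r ≤ s → v s ≤ c n := by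
    intro n
    induction n with
    | zero => exact ⟨0, le_rfl, by rw [hc0]; exact hbound0⟩
    | succ n ih =>
      obtain ⟨T, hT0, hTb⟩ := ih
      obtain ⟨T', _, hT'0, hT'b⟩ := hdecrease T (c n) hT0 (hcpos n) hTb
      exact ⟨T', hT'0, by rw [hcsucc]; exact hT'b⟩
  -- c tends to 0
  have hcbdd : BddBelow (Set.range c) := ⟨0, by rintro x ⟨n, rfl⟩; exact (hcpos n).le⟩
  have hctend : Tendsto c atTop (nhds (⨅ n, c n)) := tendsto_atTop_ciInf hcanti hcbdd
  set L := ⨅ n, c n with hLdef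
  have hL0 : 0 ≤ L := le_ciInf (fun n => (hcpos n).le)
  have hγtend : Tendsto (fun n => γ (c n)) atTop (nhds (γ L)) := by
    have h1 : Tendsto γ (nhdsWithin L (Set.Ici 0)) (nhds (γ L)) :=
      (hγcont L (Set.mem_Ici.mpr hL0)).tendsto
    apply h1.comp
    rw [tendsto_nhdsWithin_iff]
    exact ⟨hctend, Filter.Eventually.of_forall (fun n => Set.mem_Ici.mpr (hcpos n).le)⟩
  have hshift : Tendsto (fun n => c (n + 1)) atTop (nhds L) :=
    hctend.comp (Filter.tendsto_add_atTop_nat 1)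
  have hshift2 : Tendsto (fun n => c (n + 1)) atTop (nhds ((γ L + L) / 2)) := by
    simp only [hcsucc]
    exact (hγtend.add hctend).div_const 2
  have hLfix : L = (γ L + L) / 2 := tendsto_nhds_unique hshift hshift2
  have hLzero : L = 0 := by
    by_contra h
    have hLpos : 0 < L := lt_of_le_of_ne hL0 (Ne.symm h)
    have := hsg L hLpos
    linarith
  rw [hLzero] at hctend
  -- conclude
  rw [Metric.tendsto_atTop]
  intro ε hε
  have : ∀ᶠ n in atTop, c n < ε := hctend.eventually_lt_const hε
  obtain ⟨n, hn⟩ := this.exists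
  obtain ⟨T, hT0, hTb⟩ := hkey n
  refine ⟨T, fun t ht => ?_⟩
  have h1 : v t ≤ c n := hTb t (by linarith)
  have h2 : 0 ≤ v t := hvnn t (by simp only [mem_Ici]; linarith)
  rw [Real.dist_eq, abs_of_nonneg (by linarith)]
  linarith
end
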